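/- arXiv:1606.05103 — 2 statements merged into one kernel-verified Lean document; each statement's English description precedes it below -/
import Mathlib

section
/- (Evolution of the Jacobian under the cylindrical Gross–Pitaevskii flow.) Let ε > 0, let I ⊂ ℝ be an open interval, and let u : H × I → ℂ be a smooth solution of i r ∂_t u − div(r∇u) = (r/ε²) u(1−|u|²) on H × I. Then for every φ ∈ C^∞_c(H) and every t ∈ I, (d/dt) ∫_H Ju(·,t) φ dr dz = F(∇u(·,t), φ), where, writing coordinates (x₁,x₂) = (r,z) and with ε_{ij} the standard antisymmetric symbol (ε₁₂ = 1 = −ε₂₁, ε₁₁ = ε₂₂ = 0), F(∇v, φ) := −∫_H ε_{ij} (∂_k r / r) (∂_j v, ∂_k v) ∂_i φ + ∫_H ε_{ij} (∂_j v, ∂_k v) ∂_{ik} φ (summation over repeated indices), and (y,w) := Re(y w̄) for complex y, w. -/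
open MeasureTheory Filter Metric
open scoped Topology Real

noncomputable section

/-- Euclidean norm on `ℝ × ℝ`. -/
def nE (v : ℝ × ℝ) : ℝ := Real.sqrt (v.1 ^ 2 + v.2 ^ 2)

/-- Euclidean squared norm on `ℝ × ℝ`. -/
def sqE (v : ℝ × ℝ) : ℝ := v.1 ^ 2 + v.2 ^ 2

/-- Euclidean distance on `ℝ × ℝ`. -/
def dE (p q : ℝ × ℝ) : ℝ := nE (p - q)

/-- Euclidean open ball in `ℝ × ℝ`. -/
def ballE (a : ℝ × ℝ) (r : ℝ) : Set (ℝ × ℝ) := {p | dE p a < r}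

/-- The open half plane `H = {(r,z) : r > 0}`. -/
def Hp : Set (ℝ × ℝ) := {p | 0 < p.1}

/-- Partial derivative in the `r` direction, complex valued. -/
def pdR (u : ℝ × ℝ → ℂ) (p : ℝ × ℝ) : ℂ := fderiv ℝ u p (1, 0)
/-- Partial derivative in the `z` direction, complex valued. -/
def pdZ (u : ℝ × ℝ → ℂ) (p : ℝ × ℝ) : ℂ := fderiv ℝ u p (0, 1)
/-- Partial derivative in the `r` direction, real valued. -/
def pdRr (f : ℝ × ℝ → ℝ) (p : ℝ × ℝ) : ℝ := fderiv ℝ f p (1, 0)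
/-- Partial derivative in the `z` direction, real valued. -/
def pdZr (f : ℝ × ℝ → ℝ) (p : ℝ × ℝ) : ℝ := fderiv ℝ f p (0, 1)

/-- Gradient of a real function on `ℝ × ℝ`. -/
def gradR (f : ℝ × ℝ → ℝ) (p : ℝ × ℝ) : ℝ × ℝ := (pdRr f p, pdZr f p)

/-- `y × w = Re (i y conj w)`. -/
def crossC (y w : ℂ) : ℝ := (Complex.I * y * (starRingEnd ℂ) w).re

/-- Jacobian `Ju = ∂_r u × ∂_z u`. -/
def Jac (u : ℝ × ℝ → ℂ) (p : ℝ × ℝ) : ℝ := crossC (pdR u p) (pdZ u p)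

/-- Ginzburg–Landau energy density. -/
def eGL (ε : ℝ) (u : ℝ × ℝ → ℂ) (p : ℝ × ℝ) : ℝ :=
  (‖pdR u p‖ ^ 2 + ‖pdZ u p‖ ^ 2) / 2 + (1 - ‖u p‖ ^ 2) ^ 2 / (4 * ε ^ 2)

/-- Weighted Ginzburg–Landau energy on the half plane. -/
def Ew (ε : ℝ) (u : ℝ × ℝ → ℂ) : ℝ := ∫ p in Hp, eGL ε u p * p.1

/-- `r` component of the current `j(u) = Im (conj u ∇u)`. -/
def jr (u : ℝ × ℝ → ℂ) (p : ℝ × ℝ) : ℝ := ((starRingEnd ℂ) (u p) * pdR u p).im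
/-- `z` component of the current `j(u)`. -/
def jz (u : ℝ × ℝ → ℂ) (p : ℝ × ℝ) : ℝ := ((starRingEnd ℂ) (u p) * pdZ u p).im

/-- The loop-current vector potential `A_a`. -/
def Avec (a : ℝ × ℝ) (p : ℝ × ℝ) : ℝ :=
  (a.1 / 2) * ∫ t in (0:ℝ)..(2 * π),
    Real.cos t / Real.sqrt (a.1 ^ 2 + p.1 ^ 2 + (p.2 - a.2) ^ 2 - 2 * a.1 * p.1 * Real.cos t)

/-- Ginzburg–Landau energy on the unit disc. -/
def eDisc (ε : ℝ) (v : ℝ × ℝ → ℂ) : ℝ :=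
  ∫ p in ballE ((0:ℝ), (0:ℝ)) 1,
    ((‖pdR v p‖ ^ 2 + ‖pdZ v p‖ ^ 2) / 2 + (1 - ‖v p‖ ^ 2) ^ 2 / (4 * ε ^ 2))

/-- The constant `γ` of Bethuel–Brezis–Hélein. -/
def glGamma : ℝ :=
  Filter.liminf (fun ε : ℝ =>
      sInf {E : ℝ | ∃ v : ℝ × ℝ → ℂ,
        DifferentiableOn ℝ v (ballE ((0:ℝ), (0:ℝ)) 1) ∧
        IntegrableOn (fun p => (‖pdR v p‖ ^ 2 + ‖pdZ v p‖ ^ 2) / 2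
            + (1 - ‖v p‖ ^ 2) ^ 2 / (4 * ε ^ 2)) (ballE ((0:ℝ), (0:ℝ)) 1) ∧
        (∀ p : ℝ × ℝ, nE p = 1 → v p = (p.1 : ℂ) + (p.2 : ℂ) * Complex.I) ∧
        E = eDisc ε v}
      - π * |Real.log ε|) (𝓝[>] (0:ℝ))

/-- The Hamiltonian `H_ε`. -/
def Hfun (ε : ℝ) {n : ℕ} (a : Fin n → ℝ × ℝ) : ℝ :=
  ∑ i, (a i).1 * (π * Real.log ((a i).1 / ε) + glGamma + π * (3 * Real.log 2 - 2)
      + π * ∑ j ∈ Finset.univ.erase i, Avec (a j) (a i))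

/-- `ρ_a = (1/4) min (min_{i≠j} |aᵢ-aⱼ|, minᵢ r(aᵢ))`. -/
def rhoConf {n : ℕ} (a : Fin n → ℝ × ℝ) : ℝ :=
  (1 / 4) * sInf ({d | ∃ i j : Fin n, i ≠ j ∧ d = dE (a i) (a j)} ∪ {d | ∃ i, d = (a i).1})

/-- Positive part. -/
def posPart' (x : ℝ) : ℝ := max x 0

/-- Admissible test functions for the `Ẇ^{-1,1}(Ω)` norm. -/
def W11Adm (Ω : Set (ℝ × ℝ)) (φ : ℝ × ℝ → ℝ) : Prop :=
  (∀ p q : ℝ × ℝ, |φ p - φ q| ≤ dE p q) ∧ HasCompactSupport φ ∧ ∀ p ∉ Ω, φ p = 0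

/-- `‖Ju − π Σᵢ δ_{aᵢ}‖_{Ẇ^{-1,1}(Ω)}`. -/
def w11JacDiff (Ω : Set (ℝ × ℝ)) (u : ℝ × ℝ → ℂ) {n : ℕ} (a : Fin n → ℝ × ℝ) : ℝ :=
  sSup {x | ∃ φ, W11Adm Ω φ ∧ x = (∫ p in Ω, Jac u p * φ p) - π * ∑ i, φ (a i)}

/-- `Ẇ^{-1,1}(Ω)` norm of a locally integrable function. -/
def w11Fn (Ω : Set (ℝ × ℝ)) (f : ℝ × ℝ → ℝ) : ℝ :=
  sSup {x | ∃ φ, W11Adm Ω φ ∧ x = ∫ p in Ω, f p * φ p}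

/-- `div (r ∇ v)`. -/
def divRGrad (v : ℝ × ℝ → ℂ) (p : ℝ × ℝ) : ℂ :=
  fderiv ℝ (fun q => (q.1 : ℂ) * pdR v q) p (1, 0)
    + fderiv ℝ (fun q => (q.1 : ℂ) * pdZ v q) p (0, 1)

/-- A finite-energy solution of the cylindrical Gross–Pitaevskii equation `(GP)^c_ε`. -/
structure IsGPSolution (ε : ℝ) (u : ℝ → ℝ × ℝ → ℂ) : Prop where
  smooth : ContDiffOn ℝ (⊤ : ℕ∞) (fun q : (ℝ × ℝ) × ℝ => u q.2 q.1) (closure Hp ×ˢ (Set.univ : Set ℝ))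
  eqn : ∀ t : ℝ, ∀ p ∈ Hp,
    Complex.I * (p.1 : ℂ) * deriv (fun τ => u τ p) t - divRGrad (u t) p
      = ((p.1 : ℂ) / (ε : ℂ) ^ 2) * u t p * (1 - (‖u t p‖ : ℂ) ^ 2)
  bdry : ∀ t : ℝ, ∀ p : ℝ × ℝ, p.1 = 0 → pdR (u t) p = 0
  energyFin : ∀ t : ℝ, IntegrableOn (fun p => eGL ε (u t) p * p.1) Hp volume
  energyConst : ∀ t : ℝ, Ew ε (u t) = Ew ε (u 0)

/-- `∇_{aᵢ} H_ε`. -/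
def gradHi (ε : ℝ) {n : ℕ} (a : Fin n → ℝ × ℝ) (i : Fin n) : ℝ × ℝ :=
  gradR (fun x => Hfun ε (Function.update a i x)) (a i)

/-- The matrix `𝕁` with rows `(0, -1/r)` and `(1/r, 0)`. -/
def Jmat (r : ℝ) (v : ℝ × ℝ) : ℝ × ℝ := (-v.2 / r, v.1 / r)

/-- The system `(LF)_ε`. -/
def IsLFepsSol (ε : ℝ) {n : ℕ} (a : ℝ → Fin n → ℝ × ℝ) (I : Set ℝ) : Prop :=
  ∀ i : Fin n, ∀ s ∈ I,
    HasDerivWithinAt (fun τ => a τ i)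
      ((1 / (π * |Real.log ε|)) • Jmat ((a s i).1) (gradHi ε (a s) i)) I s

/-- `(x, y)^⊥ = (-y, x)`. -/
def perp2 (v : ℝ × ℝ) : ℝ × ℝ := (-v.2, v.1)

/-- The limiting leapfrogging system `(LF)`. -/
def IsLFSol (r₀ : ℝ) {n : ℕ} (b : ℝ → Fin n → ℝ × ℝ) (I : Set ℝ) : Prop :=
  ∀ i : Fin n, ∀ s ∈ I,
    HasDerivWithinAt (fun τ => b τ i)
      ((∑ j ∈ Finset.univ.erase i, (sqE (b s i - b s j))⁻¹ • perp2 (b s i - b s j))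
        - ((b s i).1 / r₀ ^ 2) • ((0:ℝ), (1:ℝ))) I s

/-- The `ε`-scaled configuration of points around `(r₀, z₀)`. -/
def aScaled (r₀ z₀ : ℝ) {n : ℕ} (b : Fin n → ℝ × ℝ) (ε : ℝ) (i : Fin n) : ℝ × ℝ :=
  (r₀ + (b i).1 / Real.sqrt |Real.log ε|, z₀ + (b i).2 / Real.sqrt |Real.log ε|)

/-- `Ψ*_ξ = Σᵢ A_{ξᵢ}`. -/
def PsiStar {n : ℕ} (ξ : Fin n → ℝ × ℝ) (p : ℝ × ℝ) : ℝ := ∑ i, Avec (ξ i) p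

/-- `r Ψ*_ξ`. -/
def rPsiStar {n : ℕ} (ξ : Fin n → ℝ × ℝ) (p : ℝ × ℝ) : ℝ := p.1 * PsiStar ξ p

/-- `r` component of `j*_ξ = -(1/r) ∇^⊥ (r Ψ*_ξ)`. -/
def jrStar {n : ℕ} (ξ : Fin n → ℝ × ℝ) (p : ℝ × ℝ) : ℝ := (1 / p.1) * pdZr (rPsiStar ξ) p
/-- `z` component of `j*_ξ`. -/
def jzStar {n : ℕ} (ξ : Fin n → ℝ × ℝ) (p : ℝ × ℝ) : ℝ := -(1 / p.1) * pdRr (rPsiStar ξ) p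

/-- Energy density of the modulus `e_ε(|u|)`. -/
def eGLmod (ε : ℝ) (u : ℝ × ℝ → ℂ) (p : ℝ × ℝ) : ℝ :=
  ((pdRr (fun q => ‖u q‖) p) ^ 2 + (pdZr (fun q => ‖u q‖) p) ^ 2) / 2
    + (1 - ‖u p‖ ^ 2) ^ 2 / (4 * ε ^ 2)

/-- The core component `𝒞ᵢ`. -/
def coreComp {n : ℕ} (ξ : Fin n → ℝ × ℝ) (rξ : ℝ) (i : Fin n) : Set (ℝ × ℝ) :=
  insert (ξ i)
    (connectedComponentIn {p : ℝ × ℝ | rPsiStar ξ (ξ i + (rξ, 0)) ≤ rPsiStar ξ p}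
      (ξ i + (rξ, 0)))

-- `r Ψ^♮_ξ`, the truncated stream function.
open Classical in
def rPsiNat {n : ℕ} (ξ : Fin n → ℝ × ℝ) (rξ : ℝ) (p : ℝ × ℝ) : ℝ :=
  if h : ∃ i, p ∈ coreComp ξ rξ i then rPsiStar ξ (ξ h.choose + (rξ, 0))
  else rPsiStar ξ p

/-- `r` component of the truncated current `j^♮(u*_ξ)`. -/
def jrNat {n : ℕ} (ξ : Fin n → ℝ × ℝ) (rξ : ℝ) (p : ℝ × ℝ) : ℝ :=
  (1 / p.1) * pdZr (rPsiNat ξ rξ) p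
/-- `z` component of the truncated current `j^♮(u*_ξ)`. -/
def jzNat {n : ℕ} (ξ : Fin n → ℝ × ℝ) (rξ : ℝ) (p : ℝ × ℝ) : ℝ :=
  -(1 / p.1) * pdRr (rPsiNat ξ rξ) p
/-- The truncated current `j^♮(u*_ξ)`. -/
def jNat {n : ℕ} (ξ : Fin n → ℝ × ℝ) (rξ : ℝ) (p : ℝ × ℝ) : ℝ × ℝ :=
  (jrNat ξ rξ p, jzNat ξ rξ p)

/-- Second partial derivatives. -/
def pd2RRr (f : ℝ × ℝ → ℝ) (p : ℝ × ℝ) : ℝ := fderiv ℝ (pdRr f) p (1, 0)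
def pd2RZr (f : ℝ × ℝ → ℝ) (p : ℝ × ℝ) : ℝ := fderiv ℝ (pdZr f) p (1, 0)
def pd2ZZr (f : ℝ × ℝ → ℝ) (p : ℝ × ℝ) : ℝ := fderiv ℝ (pdZr f) p (0, 1)

/-- The functional `F(X, φ)` for a vector field `X`. -/
def Ffun (X : ℝ × ℝ → ℝ × ℝ) (φ : ℝ × ℝ → ℝ) : ℝ :=
  ∫ p in Hp,
    (-(1 / p.1) * (X p).1 * (X p).2 * pdRr φ p + (1 / p.1) * (X p).1 ^ 2 * pdZr φ p
      + (X p).1 * (X p).2 * pd2RRr φ p + (X p).2 ^ 2 * pd2RZr φ p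
      - (X p).1 ^ 2 * pd2RZr φ p - (X p).1 * (X p).2 * pd2ZZr φ p)

/-- `Ω₀ = {r ≥ r₀/4}`. -/
def Omega0 (r₀ : ℝ) : Set (ℝ × ℝ) := {p | r₀ / 4 ≤ p.1}

/-- Excess energy `Σ_a = [E^w_ε(u) − H_ε(a)]⁺`. -/
def SigA (ε : ℝ) {n : ℕ} (u : ℝ × ℝ → ℂ) (a : Fin n → ℝ × ℝ) : ℝ :=
  posPart' (Ew ε u - Hfun ε a)

/-- Localization scale `r_a`. -/
def rA (r₀ : ℝ) {n : ℕ} (u : ℝ × ℝ → ℂ) (a : Fin n → ℝ × ℝ) : ℝ :=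
  w11JacDiff (Omega0 r₀) u a

/-- `Σ^r_a = Σ_a + r_a |log ε|`. -/
def SigRA (ε r₀ : ℝ) {n : ℕ} (u : ℝ × ℝ → ℂ) (a : Fin n → ℝ × ℝ) : ℝ :=
  SigA ε u a + rA r₀ u a * |Real.log ε|

/-- Hypothesis `(H₁)`. -/
def HypH1 (ε K₁ r₀ : ℝ) {n : ℕ} (a : Fin n → ℝ × ℝ) : Prop :=
  (∀ i j : Fin n, i ≠ j → 8 / |Real.log ε| ≤ dE (a i) (a j) ∧ dE (a i) (a j) ≤ K₁) ∧
  ∀ i, r₀ / 2 ≤ (a i).1 ∧ (a i).1 ≤ 2 * r₀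

/-- Hypothesis `(H₀)`. -/
def HypH0 (ε K₀ r₀ : ℝ) {n : ℕ} (a : Fin n → ℝ × ℝ) : Prop :=
  (∀ i j : Fin n, i ≠ j →
    K₀⁻¹ / Real.sqrt |Real.log ε| ≤ dE (a i) (a j) ∧
    dE (a i) (a j) ≤ K₀ / Real.sqrt |Real.log ε|) ∧
  (∀ i, r₀ / 2 ≤ (a i).1 ∧ (a i).1 ≤ 2 * r₀) ∧
  (∀ i, |(a i).2| ≤ K₀)

/-- The conclusions of Proposition 2.1 for the points `ξ`. -/
def Concl21 (ε C₁ r₀ : ℝ) {n : ℕ} (u : ℝ × ℝ → ℂ) (a ξ : Fin n → ℝ × ℝ) : Prop :=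
  (∀ i, ξ i ∈ Hp) ∧
  w11JacDiff {p : ℝ × ℝ | C₁ * (SigA ε u ξ + 1) / |Real.log ε| ≤ p.1} u ξ
      ≤ C₁ * ε * |Real.log ε| ^ C₁ * Real.exp (C₁ * SigRA ε r₀ u a) ∧
  (∫ p in Hp \ ⋃ i, ballE (ξ i) (ε ^ ((2:ℝ)/3)),
      (eGLmod ε u p
        + ((jr u p / ‖u p‖ - jrStar ξ p) ^ 2 + (jz u p / ‖u p‖ - jzStar ξ p) ^ 2)) * p.1)
      ≤ C₁ * (SigA ε u ξ
        + ε ^ ((1:ℝ)/3) * |Real.log ε| ^ C₁ * Real.exp (C₁ * SigRA ε r₀ u a)) ∧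
  SigA ε u ξ ≤ SigA ε u a + C₁ * rA r₀ u a * |Real.log ε|
      + C₁ * ε * |Real.log ε| ^ C₁ * Real.exp (C₁ * SigRA ε r₀ u a)

/-- A smooth cut-off at scale `Rε`. -/
def IsCutoff (Cχ Rε : ℝ) (χ : ℝ × ℝ → ℝ) : Prop :=
  ContDiff ℝ (⊤ : ℕ∞) χ ∧ (∀ p, χ p ∈ Set.Icc (0:ℝ) 1) ∧
  (∀ p : ℝ × ℝ, p ∉ (Set.Icc (0:ℝ) (2 * Rε)) ×ˢ (Set.Icc (-(2 * Rε)) (2 * Rε)) → χ p = 0) ∧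
  HasCompactSupport χ ∧
  (∀ p ∈ (Set.Icc (0:ℝ) Rε) ×ˢ (Set.Icc (-Rε) Rε), χ p = 1) ∧
  (∀ p, nE (gradR χ p) ≤ Cχ / Rε)

/-- Localized momentum `P_ε(u)`. -/
def Peps (χ : ℝ × ℝ → ℝ) (u : ℝ × ℝ → ℂ) : ℝ := ∫ p in Hp, Jac u p * p.1 ^ 2 * χ p

/-- The setting of Theorem 1.2 : a solution of `(LF)_ε` on `[0,S₀]` with the
separation and radius bounds. -/
def LFSetting (ε K₀ r₀ S₀ : ℝ) {n : ℕ} (a : ℝ → Fin n → ℝ × ℝ) : Prop :=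
  IsLFepsSol ε a (Set.Icc 0 S₀) ∧
  ∀ s ∈ Set.Icc (0:ℝ) S₀,
    (∀ i j : Fin n, i ≠ j →
      K₀⁻¹ / Real.sqrt |Real.log ε| ≤ dE (a s i) (a s j) ∧
      dE (a s i) (a s j) ≤ K₀ / Real.sqrt |Real.log ε|) ∧
    ∀ i, r₀ / 2 ≤ (a s i).1 ∧ (a s i).1 ≤ 2 * r₀

/-- `r_a^s`. -/
def rasF (ε r₀ : ℝ) {n : ℕ} (u : ℝ → ℝ × ℝ → ℂ) (a : ℝ → Fin n → ℝ × ℝ) (s : ℝ) : ℝ :=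
  rA r₀ (u (s / |Real.log ε|)) (a s)

/-- `ρ_min = K₀⁻¹/√|log ε|`. -/
def rhoMinF (ε K₀ : ℝ) : ℝ := K₀⁻¹ / Real.sqrt |Real.log ε|

/-- The stopping time `S_stop`. -/
def SstopF (ε K₀ r₀ S₀ : ℝ) {n : ℕ} (u : ℝ → ℝ × ℝ → ℂ) (a : ℝ → Fin n → ℝ × ℝ) : ℝ :=
  sSup {S | S ∈ Set.Icc (0:ℝ) S₀ ∧ ∀ s ∈ Set.Icc (0:ℝ) S, rasF ε r₀ u a s ≤ rhoMinF ε K₀ / 8}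

/-- `r_ξ^s`. -/
def rxiF (ε C₁ r₀ : ℝ) {n : ℕ} (u : ℝ → ℝ × ℝ → ℂ) (a : ℝ → Fin n → ℝ × ℝ) (s : ℝ) : ℝ :=
  C₁ * ε * |Real.log ε| ^ C₁ *
    Real.exp (C₁ * (SigA ε (u 0) (a 0) + rasF ε r₀ u a s * |Real.log ε|))

/-- The radial Ginzburg–Landau vortex profile. -/
def IsProfile (f : ℝ → ℝ) : Prop :=
  f 0 = 0 ∧ Filter.Tendsto f Filter.atTop (𝓝 1) ∧ (∀ ρ : ℝ, f ρ ∈ Set.Icc (0:ℝ) 1) ∧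
  ∃ f' f'' : ℝ → ℝ, ∀ ρ : ℝ, 0 < ρ →
    HasDerivAt f (f' ρ) ρ ∧ HasDerivAt f' (f'' ρ) ρ ∧
    f'' ρ + f' ρ / ρ - f ρ / ρ ^ 2 + f ρ * (1 - f ρ ^ 2) = 0

/-- The singular unimodular vortex-ring map associated to a point `a ∈ H`. -/
def IsSingularRing (a : ℝ × ℝ) (u : ℝ × ℝ → ℂ) : Prop :=
  ContDiffOn ℝ (⊤ : ℕ∞) u (Hp \ {a}) ∧ (∀ p ∈ Hp, ‖u p‖ = 1) ∧
  ∀ p ∈ Hp \ {a},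
    p.1 * jr u p = pdZr (fun q => q.1 * Avec a q) p ∧
    p.1 * jz u p = -pdRr (fun q => q.1 * Avec a q) p

/-- Standard basis of `ℝ × ℝ`. -/
def e2 (k : Fin 2) : ℝ × ℝ := if k = 0 then (1, 0) else (0, 1)
/-- Antisymmetric symbol. -/
def epsSym (i j : Fin 2) : ℝ := if i = 0 ∧ j = 1 then 1 else if i = 1 ∧ j = 0 then -1 else 0
/-- `(y, w) = Re (y conj w)`. -/
def rinnerC (y w : ℂ) : ℝ := (y * (starRingEnd ℂ) w).re
/-- `∂_k u`. -/
def pdC (k : Fin 2) (u : ℝ × ℝ → ℂ) (p : ℝ × ℝ) : ℂ := fderiv ℝ u p (e2 k)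
/-- `∂_{ik} φ`. -/
def pdr2 (i k : Fin 2) (φ : ℝ × ℝ → ℝ) (p : ℝ × ℝ) : ℝ :=
  fderiv ℝ (fun q => fderiv ℝ φ q (e2 k)) p (e2 i)

/-- The functional `F(∇v, φ)` of equation (2.8). -/
def FGPc (v : ℝ × ℝ → ℂ) (φ : ℝ × ℝ → ℝ) : ℝ :=
  -(∫ p in Hp, ∑ i : Fin 2, ∑ j : Fin 2, ∑ k : Fin 2,
      epsSym i j * ((if k = (0 : Fin 2) then 1 / p.1 else 0) * rinnerC (pdC j v p) (pdC k v p))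
        * fderiv ℝ φ p (e2 i))
  + ∫ p in Hp, ∑ i : Fin 2, ∑ j : Fin 2, ∑ k : Fin 2,
      epsSym i j * rinnerC (pdC j v p) (pdC k v p) * pdr2 i k φ p

section JEHelpers

open MeasureTheory

lemma jev_crossC_eq (y w : ℂ) : crossC y w = y.re * w.im - y.im * w.re := by
  simp [crossC, Complex.mul_re, Complex.mul_im]
  ring

lemma jev_rinnerC_eq (y w : ℂ) : rinnerC y w = y.re * w.re + y.im * w.im := by
  simp [rinnerC, Complex.mul_re]

lemma jev_isOpen_Hp : IsOpen Hp := isOpen_lt continuous_const continuous_fst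

/-- Integrability of functions vanishing outside a compact set, continuous on `Hp`. -/
lemma jev_integrable_of_supported {K : Set (ℝ × ℝ)} (hK : IsCompact K) {f : ℝ × ℝ → ℝ}
    (hf : ContinuousOn f Hp) (hKH : K ⊆ Hp) (h0 : ∀ p ∉ K, f p = 0) :
    Integrable f := by
  have hKm : MeasurableSet K := hK.isClosed.measurableSet
  have hfi : f = K.indicator f := by
    funext p
    by_cases hp : p ∈ K
    · simp [Set.indicator_of_mem hp]
    · simp [Set.indicator_of_notMem hp, h0 p hp]
  rw [hfi, integrable_indicator_iff hKm]
  exact (hf.mono hKH).integrableOn_compact hK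

/-- Divergence-type lemma: the integral of a directional derivative of a
compactly supported function vanishes. -/
lemma jev_integral_lineDeriv_eq_zero {g g' : ℝ × ℝ → ℝ} {v : ℝ × ℝ}
    (hd : ∀ x, HasLineDerivAt ℝ g (g' x) x v)
    (hgi : Integrable g) (hg'i : Integrable g') :
    ∫ x, g' x = 0 := by
  have h := integral_bilinear_hasLineDerivAt_right_eq_neg_left_of_integrable
    (μ := volume) (B := ContinuousLinearMap.mul ℝ ℝ)
    (f := fun _ : ℝ × ℝ => (1 : ℝ)) (f' := fun _ => (0 : ℝ)) (g := g) (g' := g') (v := v)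
    (by simpa using (integrable_zero _ _ _)) (by simpa using hg'i) (by simpa using hgi)
    (fun x _ => hasDerivAt_const (0:ℝ) (1:ℝ)) (fun x _ => hd x)
  simpa using h

lemma jev_hasLineDerivAt_of_locally_zero {f : ℝ × ℝ → ℝ} {x v : ℝ × ℝ}
    (h : ∀ᶠ q in nhds x, f q = 0) : HasLineDerivAt ℝ f 0 x v := by
  have hc : Continuous fun s : ℝ => x + s • v := by continuity
  have h2 : ∀ᶠ s in nhds (0 : ℝ), f (x + s • v) = 0 := by
    have : Filter.Tendsto (fun s : ℝ => x + s • v) (nhds 0) (nhds x) := by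
      simpa using hc.tendsto 0
    exact this.eventually h
  have h0 : HasDerivAt (fun _ : ℝ => (0 : ℝ)) 0 (0 : ℝ) := hasDerivAt_const _ _
  exact h0.congr_of_eventuallyEq (by filter_upwards [h2] with s hs using hs)

/-- Derivative of a cross product of two complex curves. -/
lemma HasDerivAt.jev_crossC {f g : ℝ → ℂ} {f' g' : ℂ} {x : ℝ}
    (hf : HasDerivAt f f' x) (hg : HasDerivAt g g' x) :
    HasDerivAt (fun s => crossC (f s) (g s)) (crossC f' (g x) + crossC (f x) g') x := by
  have hfr : HasDerivAt (fun s => (f s).re) f'.re x :=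
    Complex.reCLM.hasFDerivAt.comp_hasDerivAt x hf
  have hfi : HasDerivAt (fun s => (f s).im) f'.im x :=
    Complex.imCLM.hasFDerivAt.comp_hasDerivAt x hf
  have hgr : HasDerivAt (fun s => (g s).re) g'.re x :=
    Complex.reCLM.hasFDerivAt.comp_hasDerivAt x hg
  have hgi : HasDerivAt (fun s => (g s).im) g'.im x :=
    Complex.imCLM.hasFDerivAt.comp_hasDerivAt x hg
  have H := (hfr.mul hgi).sub (hfi.mul hgr)
  have : (fun s => crossC (f s) (g s)) = fun s => (f s).re * (g s).im - (f s).im * (g s).re := by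
    funext s; rw [jev_crossC_eq]
  rw [this]
  exact H.congr_deriv (by simp [jev_crossC_eq]; ring)

/-- Derivative of a real inner product of two complex curves. -/
lemma HasDerivAt.jev_rinnerC {f g : ℝ → ℂ} {f' g' : ℂ} {x : ℝ}
    (hf : HasDerivAt f f' x) (hg : HasDerivAt g g' x) :
    HasDerivAt (fun s => rinnerC (f s) (g s)) (rinnerC f' (g x) + rinnerC (f x) g') x := by
  have hfr : HasDerivAt (fun s => (f s).re) f'.re x :=
    Complex.reCLM.hasFDerivAt.comp_hasDerivAt x hf
  have hfi : HasDerivAt (fun s => (f s).im) f'.im x :=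
    Complex.imCLM.hasFDerivAt.comp_hasDerivAt x hf
  have hgr : HasDerivAt (fun s => (g s).re) g'.re x :=
    Complex.reCLM.hasFDerivAt.comp_hasDerivAt x hg
  have hgi : HasDerivAt (fun s => (g s).im) g'.im x :=
    Complex.imCLM.hasFDerivAt.comp_hasDerivAt x hg
  have H := (hfr.mul hgr).add (hfi.mul hgi)
  have : (fun s => rinnerC (f s) (g s)) = fun s => (f s).re * (g s).re + (f s).im * (g s).im := by
    funext s; rw [jev_rinnerC_eq]
  rw [this]
  exact H.congr_deriv (by simp [jev_rinnerC_eq]; ring)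

/-- Applying a CLM-valued function to a fixed vector, differentiability. -/
lemma jev_hasFDerivAt_clm_applyv {E F : Type*} [NormedAddCommGroup E] [NormedSpace ℝ E]
    [NormedAddCommGroup F] [NormedSpace ℝ F]
    {f : E → E →L[ℝ] F} {L : E →L[ℝ] (E →L[ℝ] F)} {p : E} (h : HasFDerivAt f L p) (w : E) :
    HasFDerivAt (fun q => f q w) ((ContinuousLinearMap.apply ℝ F w).comp L) p :=
  (ContinuousLinearMap.apply ℝ F w).hasFDerivAt.comp p h

lemma jev_fderiv_zero_of_not_mem_tsupport {E : Type*} [NormedAddCommGroup E] [NormedSpace ℝ E]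
    {f : ℝ × ℝ → E} {p : ℝ × ℝ} (h : p ∉ tsupport f) : fderiv ℝ f p = 0 := by
  have hev : f =ᶠ[nhds p] fun _ => 0 := by
    filter_upwards [notMem_tsupport_iff_eventuallyEq.mp h] with q hq using hq
  rw [hev.fderiv_eq]
  exact fderiv_const_apply 0


lemma jev_hasDerivAt_congr {f : ℝ → ℝ} {a b : ℝ} {x : ℝ}
    (h : HasDerivAt f a x) (hab : a = b) : HasDerivAt f b x := hab ▸ h


lemma jev_continuousOn_crossC {α : Type*} [TopologicalSpace α] {f g : α → ℂ} {s : Set α}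
    (hf : ContinuousOn f s) (hg : ContinuousOn g s) :
    ContinuousOn (fun p => crossC (f p) (g p)) s := by
  have : (fun p => crossC (f p) (g p))
      = fun p => (f p).re * (g p).im - (f p).im * (g p).re := by
    funext p; rw [jev_crossC_eq]
  rw [this]
  exact ((Complex.continuous_re.comp_continuousOn hf).mul
    (Complex.continuous_im.comp_continuousOn hg)).sub
    ((Complex.continuous_im.comp_continuousOn hf).mul
      (Complex.continuous_re.comp_continuousOn hg))

lemma jev_continuousOn_rinnerC {α : Type*} [TopologicalSpace α] {f g : α → ℂ} {s : Set α}
    (hf : ContinuousOn f s) (hg : ContinuousOn g s) :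
    ContinuousOn (fun p => rinnerC (f p) (g p)) s := by
  have : (fun p => rinnerC (f p) (g p))
      = fun p => (f p).re * (g p).re + (f p).im * (g p).im := by
    funext p; rw [jev_rinnerC_eq]
  rw [this]
  exact ((Complex.continuous_re.comp_continuousOn hf).mul
    (Complex.continuous_re.comp_continuousOn hg)).add
    ((Complex.continuous_im.comp_continuousOn hf).mul
      (Complex.continuous_im.comp_continuousOn hg))

end JEHelpers

section JEDefs

/-- Basis vectors of `(ℝ × ℝ) × ℝ`. -/
def jevE1 : (ℝ × ℝ) × ℝ := ((1, 0), 0)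
def jevE2 : (ℝ × ℝ) × ℝ := ((0, 1), 0)
def jevE3 : (ℝ × ℝ) × ℝ := ((0, 0), 1)

/-- First derivative field of the joint function. -/
def jevA (U : (ℝ × ℝ) × ℝ → ℂ) (q w : (ℝ × ℝ) × ℝ) : ℂ := fderiv ℝ U q w
/-- Second derivative field of the joint function. -/
def jevS (U : (ℝ × ℝ) × ℝ → ℂ) (q w w' : (ℝ × ℝ) × ℝ) : ℂ := fderiv ℝ (fderiv ℝ U) q w w'

/-- `(1 - |u|²)²`. -/
def jevW (U : (ℝ × ℝ) × ℝ → ℂ) (t : ℝ) (p : ℝ × ℝ) : ℝ :=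
  (1 - ((U (p, t)).re ^ 2 + (U (p, t)).im ^ 2)) ^ 2

/-- Time derivative of the Jacobian density. -/
def jevDJ (U : (ℝ × ℝ) × ℝ → ℂ) (t : ℝ) (p : ℝ × ℝ) : ℝ :=
  crossC (jevS U (p, t) jevE3 jevE1) (jevA U (p, t) jevE2)
    + crossC (jevA U (p, t) jevE1) (jevS U (p, t) jevE3 jevE2)

/-- The first component of the flux vector field. -/
def jevR1 (U : (ℝ × ℝ) × ℝ → ℂ) (t ε : ℝ) (φ : ℝ × ℝ → ℝ) (p : ℝ × ℝ) : ℝ :=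
  crossC (jevA U (p, t) jevE3) (jevA U (p, t) jevE2) * φ p
  - (4 * ε ^ 2)⁻¹ * jevW U t p * fderiv ℝ φ p (0, 1)
  - rinnerC (jevA U (p, t) jevE1) (jevA U (p, t) jevE2) * fderiv ℝ φ p (1, 0)
  + (1 / 2) * (rinnerC (jevA U (p, t) jevE1) (jevA U (p, t) jevE1)
      - rinnerC (jevA U (p, t) jevE2) (jevA U (p, t) jevE2)) * fderiv ℝ φ p (0, 1)

/-- The second component of the flux vector field. -/
def jevR2 (U : (ℝ × ℝ) × ℝ → ℂ) (t ε : ℝ) (φ : ℝ × ℝ → ℝ) (p : ℝ × ℝ) : ℝ :=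
  -(crossC (jevA U (p, t) jevE3) (jevA U (p, t) jevE1) * φ p)
  + (4 * ε ^ 2)⁻¹ * jevW U t p * fderiv ℝ φ p (1, 0)
  + (1 / 2) * (rinnerC (jevA U (p, t) jevE1) (jevA U (p, t) jevE1)
      - rinnerC (jevA U (p, t) jevE2) (jevA U (p, t) jevE2)) * fderiv ℝ φ p (1, 0)
  + rinnerC (jevA U (p, t) jevE1) (jevA U (p, t) jevE2) * fderiv ℝ φ p (0, 1)

/-- The `r`-derivative of `jevR1`. -/
def jevR1d (U : (ℝ × ℝ) × ℝ → ℂ) (t ε : ℝ) (φ : ℝ × ℝ → ℝ) (p : ℝ × ℝ) : ℝ :=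
  (crossC (jevS U (p, t) jevE1 jevE3) (jevA U (p, t) jevE2)
      + crossC (jevA U (p, t) jevE3) (jevS U (p, t) jevE1 jevE2)) * φ p
  + crossC (jevA U (p, t) jevE3) (jevA U (p, t) jevE2) * fderiv ℝ φ p (1, 0)
  - (4 * ε ^ 2)⁻¹ *
      ((2 * (1 - ((U (p, t)).re ^ 2 + (U (p, t)).im ^ 2)) *
        (-(2 * ((U (p, t)).re * (jevA U (p, t) jevE1).re
            + (U (p, t)).im * (jevA U (p, t) jevE1).im)))) * fderiv ℝ φ p (0, 1)
        + jevW U t p * pdr2 0 1 φ p)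
  - ((rinnerC (jevS U (p, t) jevE1 jevE1) (jevA U (p, t) jevE2)
      + rinnerC (jevA U (p, t) jevE1) (jevS U (p, t) jevE1 jevE2)) * fderiv ℝ φ p (1, 0)
      + rinnerC (jevA U (p, t) jevE1) (jevA U (p, t) jevE2) * pdr2 0 0 φ p)
  + (1 / 2) * ((2 * (rinnerC (jevS U (p, t) jevE1 jevE1) (jevA U (p, t) jevE1)
        - rinnerC (jevS U (p, t) jevE1 jevE2) (jevA U (p, t) jevE2))) * fderiv ℝ φ p (0, 1)
      + (rinnerC (jevA U (p, t) jevE1) (jevA U (p, t) jevE1)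
        - rinnerC (jevA U (p, t) jevE2) (jevA U (p, t) jevE2)) * pdr2 0 1 φ p)

/-- The `z`-derivative of `jevR2`. -/
def jevR2d (U : (ℝ × ℝ) × ℝ → ℂ) (t ε : ℝ) (φ : ℝ × ℝ → ℝ) (p : ℝ × ℝ) : ℝ :=
  -((crossC (jevS U (p, t) jevE2 jevE3) (jevA U (p, t) jevE1)
      + crossC (jevA U (p, t) jevE3) (jevS U (p, t) jevE2 jevE1)) * φ p
      + crossC (jevA U (p, t) jevE3) (jevA U (p, t) jevE1) * fderiv ℝ φ p (0, 1))
  + (4 * ε ^ 2)⁻¹ *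
      ((2 * (1 - ((U (p, t)).re ^ 2 + (U (p, t)).im ^ 2)) *
        (-(2 * ((U (p, t)).re * (jevA U (p, t) jevE2).re
            + (U (p, t)).im * (jevA U (p, t) jevE2).im)))) * fderiv ℝ φ p (1, 0)
        + jevW U t p * pdr2 1 0 φ p)
  + (1 / 2) * ((2 * (rinnerC (jevS U (p, t) jevE2 jevE1) (jevA U (p, t) jevE1)
        - rinnerC (jevS U (p, t) jevE2 jevE2) (jevA U (p, t) jevE2))) * fderiv ℝ φ p (1, 0)
      + (rinnerC (jevA U (p, t) jevE1) (jevA U (p, t) jevE1)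
        - rinnerC (jevA U (p, t) jevE2) (jevA U (p, t) jevE2)) * pdr2 1 0 φ p)
  + ((rinnerC (jevS U (p, t) jevE2 jevE1) (jevA U (p, t) jevE2)
      + rinnerC (jevA U (p, t) jevE1) (jevS U (p, t) jevE2 jevE2)) * fderiv ℝ φ p (0, 1)
      + rinnerC (jevA U (p, t) jevE1) (jevA U (p, t) jevE2) * pdr2 1 1 φ p)

/-- The FGPc integrand in explicit form. -/
def jevT (U : (ℝ × ℝ) × ℝ → ℂ) (t : ℝ) (φ : ℝ × ℝ → ℝ) (p : ℝ × ℝ) : ℝ :=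
  -((1 / p.1) * (rinnerC (jevA U (p, t) jevE2) (jevA U (p, t) jevE1) * fderiv ℝ φ p (1, 0)
      - rinnerC (jevA U (p, t) jevE1) (jevA U (p, t) jevE1) * fderiv ℝ φ p (0, 1)))
  + (rinnerC (jevA U (p, t) jevE2) (jevA U (p, t) jevE1) * pdr2 0 0 φ p
    + rinnerC (jevA U (p, t) jevE2) (jevA U (p, t) jevE2) * pdr2 0 1 φ p
    - rinnerC (jevA U (p, t) jevE1) (jevA U (p, t) jevE1) * pdr2 1 0 φ p
    - rinnerC (jevA U (p, t) jevE1) (jevA U (p, t) jevE2) * pdr2 1 1 φ p)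

end JEDefs


set_option maxHeartbeats 2000000

/-- **Evolution of the Jacobian** under the cylindrical Gross–Pitaevskii flow,
equations (2.8)–(2.9). -/
theorem jacobian_evolution (ε : ℝ) (hε : 0 < ε) (I : Set ℝ) (hI : IsOpen I)
    (u : ℝ → ℝ × ℝ → ℂ)
    (hsm : ContDiffOn ℝ (⊤ : ℕ∞) (fun q : (ℝ × ℝ) × ℝ => u q.2 q.1) (Hp ×ˢ I))
    (heq : ∀ t ∈ I, ∀ p ∈ Hp,
      Complex.I * (p.1 : ℂ) * deriv (fun τ => u τ p) t - divRGrad (u t) p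
        = ((p.1 : ℂ) / (ε : ℂ) ^ 2) * u t p * (1 - (‖u t p‖ : ℂ) ^ 2)) :
    ∀ φ : ℝ × ℝ → ℝ, ContDiff ℝ (⊤ : ℕ∞) φ → HasCompactSupport φ → tsupport φ ⊆ Hp →
    ∀ t ∈ I,
      HasDerivAt (fun τ => ∫ p in Hp, Jac (u τ) p * φ p) (FGPc (u t) φ) t := by
  intro φ hφ hφc hφs t ht
  classical
  set U : (ℝ × ℝ) × ℝ → ℂ := fun q => u q.2 q.1 with hUdef
  set Ω : Set ((ℝ × ℝ) × ℝ) := Hp ×ˢ I with hΩdef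
  have hΩo : IsOpen Ω := jev_isOpen_Hp.prod hI
  set K : Set (ℝ × ℝ) := tsupport φ with hKdef
  have hKc : IsCompact K := hφc
  have hKH : K ⊆ Hp := hφs
  have hKm : MeasurableSet K := hKc.isClosed.measurableSet
  have hmemΩ : ∀ {p : ℝ × ℝ} {τ : ℝ}, p ∈ Hp → τ ∈ I → ((p, τ) : (ℝ × ℝ) × ℝ) ∈ Ω :=
    fun hp hτ => Set.mem_prod.2 ⟨hp, hτ⟩
  -- smoothness infrastructure
  have hUd : ∀ q ∈ Ω, HasFDerivAt U (fderiv ℝ U q) q := by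
    intro q hq
    exact ((hsm.contDiffAt (hΩo.mem_nhds hq)).differentiableAt (by simp)).hasFDerivAt
  have hD1 : ContDiffOn ℝ (⊤ : ℕ∞) (fderiv ℝ U) Ω := hsm.fderiv_of_isOpen hΩo (by simp)
  have hcontD1 : ContinuousOn (fderiv ℝ U) Ω := hD1.continuousOn
  have hSd : ∀ q ∈ Ω, HasFDerivAt (fderiv ℝ U) (fderiv ℝ (fderiv ℝ U) q) q := by
    intro q hq
    exact ((hD1.contDiffAt (hΩo.mem_nhds hq)).differentiableAt (by simp)).hasFDerivAt
  have hD2 : ContDiffOn ℝ (⊤ : ℕ∞) (fderiv ℝ (fderiv ℝ U)) Ω := hD1.fderiv_of_isOpen hΩo (by simp)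
  have hcontD2 : ContinuousOn (fderiv ℝ (fderiv ℝ U)) Ω := hD2.continuousOn
  have hSsym : ∀ q ∈ Ω, ∀ w w', jevS U q w w' = jevS U q w' w := by
    intro q hq w w'
    exact second_derivative_symmetric_of_eventually
      (Filter.eventually_of_mem (hΩo.mem_nhds hq) (fun y hy => hUd y hy)) (hSd q hq) w w'
  -- slice facts
  have huslice : ∀ {τ : ℝ} {p : ℝ × ℝ}, τ ∈ I → p ∈ Hp →
      HasFDerivAt (u τ) ((fderiv ℝ U (p, τ)).comp (ContinuousLinearMap.inl ℝ (ℝ × ℝ) ℝ)) p := by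
    intro τ p hτ hp
    have h := (hUd (p, τ) (hmemΩ hp hτ)).comp p (hasFDerivAt_prodMk_left (𝕜 := ℝ) p τ)
    have he : ContinuousLinearMap.inl ℝ (ℝ × ℝ) ℝ
        = (ContinuousLinearMap.id ℝ (ℝ × ℝ)).prod 0 := by rfl
    exact h
  have hpdR : ∀ {τ : ℝ} {p : ℝ × ℝ}, τ ∈ I → p ∈ Hp →
      pdR (u τ) p = jevA U (p, τ) jevE1 := by
    intro τ p hτ hp
    rw [pdR, (huslice hτ hp).fderiv]
    rfl
  have hpdZ : ∀ {τ : ℝ} {p : ℝ × ℝ}, τ ∈ I → p ∈ Hp →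
      pdZ (u τ) p = jevA U (p, τ) jevE2 := by
    intro τ p hτ hp
    rw [pdZ, (huslice hτ hp).fderiv]
    rfl
  have htslice : ∀ {τ : ℝ} {p : ℝ × ℝ}, τ ∈ I → p ∈ Hp →
      HasDerivAt (fun s => u s p) (jevA U (p, τ) jevE3) τ := by
    intro τ p hτ hp
    have h := (hUd _ (hmemΩ hp hτ)).comp_hasDerivAt τ
      ((hasDerivAt_const τ p).prodMk (hasDerivAt_id τ))
    exact h
  have hAslice : ∀ {τ : ℝ} {p : ℝ × ℝ} (w : (ℝ × ℝ) × ℝ), τ ∈ I → p ∈ Hp →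
      HasFDerivAt (fun x : ℝ × ℝ => jevA U (x, τ) w)
        (((ContinuousLinearMap.apply ℝ ℂ w).comp (fderiv ℝ (fderiv ℝ U) (p, τ))).comp
          (ContinuousLinearMap.inl ℝ (ℝ × ℝ) ℝ)) p := by
    intro τ p w hτ hp
    have h1 := jev_hasFDerivAt_clm_applyv (hSd _ (hmemΩ hp hτ)) w
    exact h1.comp p (hasFDerivAt_prodMk_left (𝕜 := ℝ) p τ)
  have hAline : ∀ {τ : ℝ} {p : ℝ × ℝ} (w : (ℝ × ℝ) × ℝ) (v : ℝ × ℝ), τ ∈ I → p ∈ Hp →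
      HasLineDerivAt ℝ (fun x => jevA U (x, τ) w) (jevS U (p, τ) (v, 0) w) p v := by
    intro τ p w v hτ hp
    have := (hAslice w hτ hp).hasLineDerivAt v
    simpa [jevS] using this
  have hAtime : ∀ {τ : ℝ} {p : ℝ × ℝ} (w : (ℝ × ℝ) × ℝ), τ ∈ I → p ∈ Hp →
      HasDerivAt (fun s => jevA U (p, s) w) (jevS U (p, τ) jevE3 w) τ := by
    intro τ p w hτ hp
    have h1 := jev_hasFDerivAt_clm_applyv (hSd _ (hmemΩ hp hτ)) w
    have h2 := h1.comp_hasDerivAt τ ((hasDerivAt_const τ p).prodMk (hasDerivAt_id τ))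
    exact h2
  have huline : ∀ {p : ℝ × ℝ} (v : ℝ × ℝ), p ∈ Hp →
      HasLineDerivAt ℝ (fun x => U (x, t)) (jevA U (p, t) (v, 0)) p v := by
    intro p v hp
    have := (huslice ht hp).hasLineDerivAt v
    simpa [jevA] using this
  -- continuity of fields on Hp
  have hsliceC : ∀ τ : ℝ, ContinuousOn (fun p : ℝ × ℝ => ((p, τ) : (ℝ × ℝ) × ℝ)) Hp :=
    fun τ => (continuous_id.prodMk continuous_const).continuousOn
  have hmapsTo : ∀ {τ : ℝ}, τ ∈ I →
      Set.MapsTo (fun p : ℝ × ℝ => ((p, τ) : (ℝ × ℝ) × ℝ)) Hp Ω :=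
    fun hτ p hp => hmemΩ hp hτ
  have hcontUg : ∀ {τ : ℝ}, τ ∈ I → ContinuousOn (fun p : ℝ × ℝ => U (p, τ)) Hp :=
    fun {τ} hτ => (hsm.continuousOn.comp (hsliceC τ) (hmapsTo hτ))
  have hcontAg : ∀ (w : (ℝ × ℝ) × ℝ) {τ : ℝ}, τ ∈ I →
      ContinuousOn (fun p : ℝ × ℝ => jevA U (p, τ) w) Hp := by
    intro w τ hτ
    have h1 : ContinuousOn (fun q => jevA U q w) Ω :=
      (ContinuousLinearMap.apply ℝ ℂ w).continuous.comp_continuousOn hcontD1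
    exact h1.comp (hsliceC τ) (hmapsTo hτ)
  have hcontSg : ∀ (w w' : (ℝ × ℝ) × ℝ) {τ : ℝ}, τ ∈ I →
      ContinuousOn (fun p : ℝ × ℝ => jevS U (p, τ) w w') Hp := by
    intro w w' τ hτ
    have h1 : ContinuousOn (fun q => jevS U q w w') Ω := by
      have h2 : ContinuousOn (fun q => (fderiv ℝ (fderiv ℝ U) q) w) Ω :=
        (ContinuousLinearMap.apply ℝ ((ℝ × ℝ) × ℝ →L[ℝ] ℂ) w).continuous.comp_continuousOn hcontD2
      exact (ContinuousLinearMap.apply ℝ ℂ w').continuous.comp_continuousOn h2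
    exact h1.comp (hsliceC τ) (hmapsTo hτ)
  have hcontU : ContinuousOn (fun p : ℝ × ℝ => U (p, t)) Hp := hcontUg ht
  have hcontA : ∀ w : (ℝ × ℝ) × ℝ, ContinuousOn (fun p : ℝ × ℝ => jevA U (p, t) w) Hp :=
    fun w => hcontAg w ht
  have hcontS : ∀ w w' : (ℝ × ℝ) × ℝ,
      ContinuousOn (fun p : ℝ × ℝ => jevS U (p, t) w w') Hp :=
    fun w w' => hcontSg w w' ht
  -- φ facts
  have hφdiff : Differentiable ℝ φ := hφ.differentiable (by simp)
  have hφ1C : ∀ w : ℝ × ℝ, ContDiff ℝ (⊤ : ℕ∞) (fun q => fderiv ℝ φ q w) := by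
    intro w
    exact (hφ.fderiv_right (by simp)).clm_apply contDiff_const
  have hφ0z : ∀ p ∉ K, φ p = 0 := fun p hp => image_eq_zero_of_notMem_tsupport hp
  have hφ1z : ∀ (w : ℝ × ℝ), ∀ p ∉ K, fderiv ℝ φ p w = 0 := by
    intro w p hp
    rw [jev_fderiv_zero_of_not_mem_tsupport hp]
    rfl
  have hKcopen : IsOpen Kᶜ := (isClosed_tsupport φ).isOpen_compl
  have hφ2z : ∀ (i k : Fin 2), ∀ p ∉ K, pdr2 i k φ p = 0 := by
    intro i k p hp
    have hev : (fun q => fderiv ℝ φ q (e2 k)) =ᶠ[nhds p] fun _ => 0 := by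
      filter_upwards [hKcopen.mem_nhds hp] with q hq using hφ1z (e2 k) q hq
    rw [pdr2, hev.fderiv_eq, fderiv_const_apply]
    rfl
  have hφsymm : ∀ p : ℝ × ℝ, pdr2 1 0 φ p = pdr2 0 1 φ p := by
    intro p
    have hD2φ : HasFDerivAt (fderiv ℝ φ) (fderiv ℝ (fderiv ℝ φ) p) p :=
      (((hφ.fderiv_right (m := (⊤ : ℕ∞)) (by simp)).differentiable (by simp)) p).hasFDerivAt
    have hval : ∀ i k : Fin 2, pdr2 i k φ p = fderiv ℝ (fderiv ℝ φ) p (e2 i) (e2 k) := by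
      intro i k
      have h := jev_hasFDerivAt_clm_applyv hD2φ (e2 k)
      rw [pdr2, h.fderiv]
      rfl
    rw [hval, hval]
    exact second_derivative_symmetric_of_eventually
      (Filter.Eventually.of_forall (fun y => (hφdiff y).hasFDerivAt)) hD2φ (e2 1) (e2 0)
  -- the PDE in scalar form
  have hpde : ∀ p ∈ Hp,
      Complex.I * (p.1 : ℂ) * jevA U (p, t) jevE3
        = jevA U (p, t) jevE1
          + (p.1 : ℂ) * (jevS U (p, t) jevE1 jevE1 + jevS U (p, t) jevE2 jevE2)
          + ((p.1 : ℂ) / (ε : ℂ) ^ 2) * U (p, t)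
            * (1 - (((U (p, t)).re ^ 2 + (U (p, t)).im ^ 2 : ℝ) : ℂ)) := by
    intro p hp
    have hr := heq t ht p hp
    have hderiv : deriv (fun τ => u τ p) t = jevA U (p, t) jevE3 := (htslice ht hp).deriv
    have hx : HasFDerivAt (fun q : ℝ × ℝ => ((q.1 : ℝ) : ℂ))
        (Complex.ofRealCLM.comp (ContinuousLinearMap.fst ℝ ℝ ℝ)) p :=
      Complex.ofRealCLM.hasFDerivAt.comp p hasFDerivAt_fst
    have h1 : fderiv ℝ (fun q : ℝ × ℝ => (q.1 : ℂ) * pdR (u t) q) p (1, 0)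
        = jevA U (p, t) jevE1 + (p.1 : ℂ) * jevS U (p, t) jevE1 jevE1 := by
      have hev : (fun q : ℝ × ℝ => (q.1 : ℂ) * pdR (u t) q) =ᶠ[nhds p]
          (fun q => (q.1 : ℂ) * jevA U (q, t) jevE1) := by
        filter_upwards [jev_isOpen_Hp.mem_nhds hp] with q hq
        rw [hpdR ht hq]
      rw [hev.fderiv_eq]
      have h := (hx.mul (hAslice jevE1 ht hp)).fderiv
      erw [h]
      simp [jevA, jevS, jevE1, smul_eq_mul]
      ring
    have h2 : fderiv ℝ (fun q : ℝ × ℝ => (q.1 : ℂ) * pdZ (u t) q) p (0, 1)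
        = (p.1 : ℂ) * jevS U (p, t) jevE2 jevE2 := by
      have hev : (fun q : ℝ × ℝ => (q.1 : ℂ) * pdZ (u t) q) =ᶠ[nhds p]
          (fun q => (q.1 : ℂ) * jevA U (q, t) jevE2) := by
        filter_upwards [jev_isOpen_Hp.mem_nhds hp] with q hq
        rw [hpdZ ht hq]
      rw [hev.fderiv_eq]
      have h := (hx.mul (hAslice jevE2 ht hp)).fderiv
      erw [h]
      simp [jevA, jevS, jevE2, smul_eq_mul]
    have hdiv : divRGrad (u t) p = jevA U (p, t) jevE1
        + (p.1 : ℂ) * (jevS U (p, t) jevE1 jevE1 + jevS U (p, t) jevE2 jevE2) := by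
      rw [divRGrad, h1, h2]
      ring
    have hnorm : ((‖u t p‖ : ℂ)) ^ 2
        = (((U (p, t)).re ^ 2 + (U (p, t)).im ^ 2 : ℝ) : ℂ) := by
      have hn : ‖u t p‖ ^ 2 = (U (p, t)).re ^ 2 + (U (p, t)).im ^ 2 := by
        rw [show u t p = U (p, t) from rfl]
        rw [Complex.sq_norm, Complex.normSq_apply]
        ring
      rw [← hn]
      push_cast
      ring
    rw [hderiv, hdiv, hnorm] at hr
    linear_combination hr
  -- the master pointwise identity on Hp
  have hmaster : ∀ p ∈ Hp,
      jevDJ U t p * φ p = (jevR1d U t ε φ p + jevR2d U t ε φ p) + jevT U t φ p := by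
    intro p hp
    have hp1 : p.1 ≠ 0 := ne_of_gt hp
    have hε0 : (ε : ℝ) ≠ 0 := ne_of_gt hε
    have hs12 : jevS U (p, t) jevE2 jevE1 = jevS U (p, t) jevE1 jevE2 :=
      hSsym _ (hmemΩ hp ht) _ _
    have hs31 : jevS U (p, t) jevE3 jevE1 = jevS U (p, t) jevE1 jevE3 :=
      hSsym _ (hmemΩ hp ht) _ _
    have hs32 : jevS U (p, t) jevE3 jevE2 = jevS U (p, t) jevE2 jevE3 :=
      hSsym _ (hmemΩ hp ht) _ _
    have hps := hφsymm p
    have hpde' := hpde p hp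
    have hpdeD : Complex.I * jevA U (p, t) jevE3
        = ((p.1⁻¹ : ℝ) : ℂ) * jevA U (p, t) jevE1
          + (jevS U (p, t) jevE1 jevE1 + jevS U (p, t) jevE2 jevE2)
          + (((ε ^ 2)⁻¹ : ℝ) : ℂ) * U (p, t)
            * (1 - (((U (p, t)).re ^ 2 + (U (p, t)).im ^ 2 : ℝ) : ℂ)) := by
      have hc1 : (p.1 : ℂ) ≠ 0 := by exact_mod_cast hp1
      have hc2 : (ε : ℂ) ≠ 0 := by exact_mod_cast hε0
      have hinv : (p.1 : ℂ) * (p.1 : ℂ)⁻¹ = 1 := mul_inv_cancel₀ hc1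
      push_cast at hpde' ⊢
      apply mul_left_cancel₀ hc1
      linear_combination hpde' - jevA U (p, t) jevE1 * hinv
    have hcr := congrArg Complex.im hpdeD
    have hci := congrArg Complex.re hpdeD
    simp only [Complex.mul_im, Complex.mul_re, Complex.add_im, Complex.add_re, Complex.sub_im,
      Complex.sub_re, Complex.one_im, Complex.one_re, Complex.I_im, Complex.I_re,
      Complex.ofReal_im, Complex.ofReal_re, zero_mul, mul_zero, zero_add, add_zero, one_mul,
      mul_one, zero_sub, sub_zero, neg_zero] at hcr hci
    have hcrN : (jevA U (p, t) jevE3).re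
        = p.1⁻¹ * (jevA U (p, t) jevE1).im + (jevS U (p, t) jevE1 jevE1).im
          + (jevS U (p, t) jevE2 jevE2).im
          + (ε ^ 2)⁻¹ * (U (p, t)).im * (1 - ((U (p, t)).re ^ 2 + (U (p, t)).im ^ 2)) := by
      linear_combination hcr
    have hciN : -(jevA U (p, t) jevE3).im
        = p.1⁻¹ * (jevA U (p, t) jevE1).re + (jevS U (p, t) jevE1 jevE1).re
          + (jevS U (p, t) jevE2 jevE2).re
          + (ε ^ 2)⁻¹ * (U (p, t)).re * (1 - ((U (p, t)).re ^ 2 + (U (p, t)).im ^ 2)) := by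
      linear_combination hci
    simp only [jevDJ, jevR1d, jevR2d, jevT, jevW]
    rw [hs31, hs32, hs12, hps]
    simp only [jev_crossC_eq, jev_rinnerC_eq]
    linear_combination
      (-((jevA U (p, t) jevE2).im * fderiv ℝ φ p (1, 0))
          + (jevA U (p, t) jevE1).im * fderiv ℝ φ p (0, 1)) * hcrN
        + (-((jevA U (p, t) jevE2).re * fderiv ℝ φ p (1, 0))
          + (jevA U (p, t) jevE1).re * fderiv ℝ φ p (0, 1)) * hciN
  -- line derivatives of the flux everywhere
  have hR1line : ∀ p : ℝ × ℝ,
      HasLineDerivAt ℝ (jevR1 U t ε φ) (jevR1d U t ε φ p) p ((1 : ℝ), (0 : ℝ)) := by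
    intro p
    by_cases hp : p ∈ Hp
    · have ga1 : HasDerivAt (fun s : ℝ => jevA U (p + s • ((1:ℝ),(0:ℝ)), t) jevE1)
          (jevS U (p, t) jevE1 jevE1) 0 := hAline jevE1 ((1:ℝ),(0:ℝ)) ht hp
      have ga2 : HasDerivAt (fun s : ℝ => jevA U (p + s • ((1:ℝ),(0:ℝ)), t) jevE2)
          (jevS U (p, t) jevE1 jevE2) 0 := hAline jevE2 ((1:ℝ),(0:ℝ)) ht hp
      have ga3 : HasDerivAt (fun s : ℝ => jevA U (p + s • ((1:ℝ),(0:ℝ)), t) jevE3)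
          (jevS U (p, t) jevE1 jevE3) 0 := hAline jevE3 ((1:ℝ),(0:ℝ)) ht hp
      have gu : HasDerivAt (fun s : ℝ => U (p + s • ((1:ℝ),(0:ℝ)), t))
          (jevA U (p, t) jevE1) 0 := huline ((1:ℝ),(0:ℝ)) hp
      have gvr : HasDerivAt (fun s : ℝ => (U (p + s • ((1:ℝ),(0:ℝ)), t)).re)
          ((jevA U (p, t) jevE1).re) 0 := Complex.reCLM.hasFDerivAt.comp_hasDerivAt 0 gu
      have gvi : HasDerivAt (fun s : ℝ => (U (p + s • ((1:ℝ),(0:ℝ)), t)).im)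
          ((jevA U (p, t) jevE1).im) 0 := Complex.imCLM.hasFDerivAt.comp_hasDerivAt 0 gu
      have gph0 : HasDerivAt (fun s : ℝ => φ (p + s • ((1:ℝ),(0:ℝ))))
          (fderiv ℝ φ p ((1:ℝ),(0:ℝ))) 0 :=
        (hφdiff p).hasFDerivAt.hasLineDerivAt ((1:ℝ),(0:ℝ))
      have gph1 : HasDerivAt (fun s : ℝ => fderiv ℝ φ (p + s • ((1:ℝ),(0:ℝ))) ((1:ℝ),(0:ℝ)))
          (pdr2 0 0 φ p) 0 :=
        ((hφ1C ((1:ℝ),(0:ℝ))).differentiable (by simp) p).hasFDerivAt.hasLineDerivAt ((1:ℝ),(0:ℝ))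
      have gph2 : HasDerivAt (fun s : ℝ => fderiv ℝ φ (p + s • ((1:ℝ),(0:ℝ))) ((0:ℝ),(1:ℝ)))
          (pdr2 0 1 φ p) 0 :=
        ((hφ1C ((0:ℝ),(1:ℝ))).differentiable (by simp) p).hasFDerivAt.hasLineDerivAt ((1:ℝ),(0:ℝ))
      have gW := ((hasDerivAt_const (0:ℝ) (1:ℝ)).sub ((gvr.pow 2).add (gvi.pow 2))).pow 2
      have g1 := (ga3.jev_crossC ga2).mul gph0
      have g2 := (gW.const_mul ((4 * ε ^ 2)⁻¹ : ℝ)).mul gph2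
      have g3 := (ga1.jev_rinnerC ga2).mul gph1
      have g4 := (((ga1.jev_rinnerC ga1).sub (ga2.jev_rinnerC ga2)).const_mul
        ((1:ℝ)/2)).mul gph2
      have gAll := ((g1.sub g2).sub g3).add g4
      show HasDerivAt (fun s : ℝ => jevR1 U t ε φ (p + s • ((1:ℝ),(0:ℝ))))
        (jevR1d U t ε φ p) 0
      refine jev_hasDerivAt_congr gAll ?_
      simp only [zero_smul, add_zero, jevR1d, jevW, jev_crossC_eq, jev_rinnerC_eq, pow_one,
        Nat.cast_ofNat, Pi.sub_apply, Pi.add_apply, Pi.pow_apply]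
      ring
    · have hpK : p ∉ K := fun hK => hp (hKH hK)
      have hev : ∀ᶠ q in nhds p, jevR1 U t ε φ q = 0 := by
        filter_upwards [hKcopen.mem_nhds hpK] with q hq
        simp [jevR1, hφ0z q hq, hφ1z _ q hq]
      have h0 : jevR1d U t ε φ p = 0 := by
        simp [jevR1d, hφ0z p hpK, hφ1z _ p hpK, hφ2z _ _ p hpK]
      rw [h0]
      exact jev_hasLineDerivAt_of_locally_zero hev
  have hR2line : ∀ p : ℝ × ℝ,
      HasLineDerivAt ℝ (jevR2 U t ε φ) (jevR2d U t ε φ p) p ((0 : ℝ), (1 : ℝ)) := by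
    intro p
    by_cases hp : p ∈ Hp
    · have ga1 : HasDerivAt (fun s : ℝ => jevA U (p + s • ((0:ℝ),(1:ℝ)), t) jevE1)
          (jevS U (p, t) jevE2 jevE1) 0 := hAline jevE1 ((0:ℝ),(1:ℝ)) ht hp
      have ga2 : HasDerivAt (fun s : ℝ => jevA U (p + s • ((0:ℝ),(1:ℝ)), t) jevE2)
          (jevS U (p, t) jevE2 jevE2) 0 := hAline jevE2 ((0:ℝ),(1:ℝ)) ht hp
      have ga3 : HasDerivAt (fun s : ℝ => jevA U (p + s • ((0:ℝ),(1:ℝ)), t) jevE3)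
          (jevS U (p, t) jevE2 jevE3) 0 := hAline jevE3 ((0:ℝ),(1:ℝ)) ht hp
      have gu : HasDerivAt (fun s : ℝ => U (p + s • ((0:ℝ),(1:ℝ)), t))
          (jevA U (p, t) jevE2) 0 := huline ((0:ℝ),(1:ℝ)) hp
      have gvr : HasDerivAt (fun s : ℝ => (U (p + s • ((0:ℝ),(1:ℝ)), t)).re)
          ((jevA U (p, t) jevE2).re) 0 := Complex.reCLM.hasFDerivAt.comp_hasDerivAt 0 gu
      have gvi : HasDerivAt (fun s : ℝ => (U (p + s • ((0:ℝ),(1:ℝ)), t)).im)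
          ((jevA U (p, t) jevE2).im) 0 := Complex.imCLM.hasFDerivAt.comp_hasDerivAt 0 gu
      have gph0 : HasDerivAt (fun s : ℝ => φ (p + s • ((0:ℝ),(1:ℝ))))
          (fderiv ℝ φ p ((0:ℝ),(1:ℝ))) 0 :=
        (hφdiff p).hasFDerivAt.hasLineDerivAt ((0:ℝ),(1:ℝ))
      have gph1 : HasDerivAt (fun s : ℝ => fderiv ℝ φ (p + s • ((0:ℝ),(1:ℝ))) ((1:ℝ),(0:ℝ)))
          (pdr2 1 0 φ p) 0 :=
        ((hφ1C ((1:ℝ),(0:ℝ))).differentiable (by simp) p).hasFDerivAt.hasLineDerivAt ((0:ℝ),(1:ℝ))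
      have gph2 : HasDerivAt (fun s : ℝ => fderiv ℝ φ (p + s • ((0:ℝ),(1:ℝ))) ((0:ℝ),(1:ℝ)))
          (pdr2 1 1 φ p) 0 :=
        ((hφ1C ((0:ℝ),(1:ℝ))).differentiable (by simp) p).hasFDerivAt.hasLineDerivAt ((0:ℝ),(1:ℝ))
      have gW := ((hasDerivAt_const (0:ℝ) (1:ℝ)).sub ((gvr.pow 2).add (gvi.pow 2))).pow 2
      have g1 := (((ga3.jev_crossC ga1).mul gph0).neg)
      have g2 := (gW.const_mul ((4 * ε ^ 2)⁻¹ : ℝ)).mul gph1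
      have g3 := (((ga1.jev_rinnerC ga1).sub (ga2.jev_rinnerC ga2)).const_mul
        ((1:ℝ)/2)).mul gph1
      have g4 := (ga1.jev_rinnerC ga2).mul gph2
      have gAll := ((g1.add g2).add g3).add g4
      show HasDerivAt (fun s : ℝ => jevR2 U t ε φ (p + s • ((0:ℝ),(1:ℝ))))
        (jevR2d U t ε φ p) 0
      refine jev_hasDerivAt_congr gAll ?_
      simp only [zero_smul, add_zero, jevR2d, jevW, jev_crossC_eq, jev_rinnerC_eq, pow_one,
        Nat.cast_ofNat, Pi.sub_apply, Pi.add_apply, Pi.pow_apply]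
      ring
    · have hpK : p ∉ K := fun hK => hp (hKH hK)
      have hev : ∀ᶠ q in nhds p, jevR2 U t ε φ q = 0 := by
        filter_upwards [hKcopen.mem_nhds hpK] with q hq
        simp [jevR2, hφ0z q hq, hφ1z _ q hq]
      have h0 : jevR2d U t ε φ p = 0 := by
        simp [jevR2d, hφ0z p hpK, hφ1z _ p hpK, hφ2z _ _ p hpK]
      rw [h0]
      exact jev_hasLineDerivAt_of_locally_zero hev
  -- integrability
  -- continuity library
  have hφcont : ContinuousOn φ Hp := hφ.continuous.continuousOn
  have hph1c : ∀ w : ℝ × ℝ, ContinuousOn (fun p => fderiv ℝ φ p w) Hp :=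
    fun w => ((hφ1C w).continuous).continuousOn
  have hpdr2C : ∀ i k : Fin 2, ContinuousOn (fun p => pdr2 i k φ p) Hp := by
    intro i k
    have h : ContDiff ℝ (⊤ : ℕ∞) (fun p => pdr2 i k φ p) :=
      ((hφ1C (e2 k)).fderiv_right (by simp)).clm_apply contDiff_const
    exact h.continuous.continuousOn
  have hcUre : ContinuousOn (fun p : ℝ × ℝ => (U (p, t)).re) Hp :=
    Complex.continuous_re.comp_continuousOn hcontU
  have hcUim : ContinuousOn (fun p : ℝ × ℝ => (U (p, t)).im) Hp :=
    Complex.continuous_im.comp_continuousOn hcontU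
  have hWc : ContinuousOn (jevW U t) Hp := by
    unfold jevW
    exact (continuousOn_const.sub ((hcUre.pow 2).add (hcUim.pow 2))).pow 2
  have hCR1 : ContinuousOn (jevR1 U t ε φ) Hp := by
    unfold jevR1
    exact (((((jev_continuousOn_crossC (hcontA jevE3) (hcontA jevE2)).mul hφcont).sub
      ((continuousOn_const.mul hWc).mul (hph1c (0, 1)))).sub
      ((jev_continuousOn_rinnerC (hcontA jevE1) (hcontA jevE2)).mul (hph1c (1, 0)))).add
      ((continuousOn_const.mul ((jev_continuousOn_rinnerC (hcontA jevE1) (hcontA jevE1)).sub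
        (jev_continuousOn_rinnerC (hcontA jevE2) (hcontA jevE2)))).mul (hph1c (0, 1))))
  have hCR2 : ContinuousOn (jevR2 U t ε φ) Hp := by
    unfold jevR2
    exact ((((((jev_continuousOn_crossC (hcontA jevE3) (hcontA jevE1)).mul hφcont)).neg.add
      ((continuousOn_const.mul hWc).mul (hph1c (1, 0)))).add
      ((continuousOn_const.mul ((jev_continuousOn_rinnerC (hcontA jevE1) (hcontA jevE1)).sub
        (jev_continuousOn_rinnerC (hcontA jevE2) (hcontA jevE2)))).mul (hph1c (1, 0)))).add
      ((jev_continuousOn_rinnerC (hcontA jevE1) (hcontA jevE2)).mul (hph1c (0, 1))))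
  have hCR1d : ContinuousOn (jevR1d U t ε φ) Hp := by
    unfold jevR1d
    refine ContinuousOn.add (ContinuousOn.sub (ContinuousOn.sub (ContinuousOn.add ?_ ?_) ?_) ?_) ?_
    · exact ((jev_continuousOn_crossC (hcontS jevE1 jevE3) (hcontA jevE2)).add
        (jev_continuousOn_crossC (hcontA jevE3) (hcontS jevE1 jevE2))).mul hφcont
    · exact (jev_continuousOn_crossC (hcontA jevE3) (hcontA jevE2)).mul (hph1c (1, 0))
    · refine continuousOn_const.mul (ContinuousOn.add (ContinuousOn.mul ?_ (hph1c (0, 1)))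
        (hWc.mul (hpdr2C 0 1)))
      exact (continuousOn_const.mul (continuousOn_const.sub ((hcUre.pow 2).add
        (hcUim.pow 2)))).mul
        (((continuousOn_const.mul ((hcUre.mul (Complex.continuous_re.comp_continuousOn
          (hcontA jevE1))).add (hcUim.mul (Complex.continuous_im.comp_continuousOn
          (hcontA jevE1)))))).neg)
    · exact (((jev_continuousOn_rinnerC (hcontS jevE1 jevE1) (hcontA jevE2)).add
        (jev_continuousOn_rinnerC (hcontA jevE1) (hcontS jevE1 jevE2))).mul (hph1c (1, 0))).add
        ((jev_continuousOn_rinnerC (hcontA jevE1) (hcontA jevE2)).mul (hpdr2C 0 0))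
    · refine continuousOn_const.mul (ContinuousOn.add (ContinuousOn.mul ?_ (hph1c (0, 1))) ?_)
      · exact continuousOn_const.mul ((jev_continuousOn_rinnerC (hcontS jevE1 jevE1)
          (hcontA jevE1)).sub (jev_continuousOn_rinnerC (hcontS jevE1 jevE2) (hcontA jevE2)))
      · exact ((jev_continuousOn_rinnerC (hcontA jevE1) (hcontA jevE1)).sub
          (jev_continuousOn_rinnerC (hcontA jevE2) (hcontA jevE2))).mul (hpdr2C 0 1)
  have hCR2d : ContinuousOn (jevR2d U t ε φ) Hp := by
    unfold jevR2d
    refine ContinuousOn.add (ContinuousOn.add (ContinuousOn.add (ContinuousOn.neg ?_) ?_) ?_) ?_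
    · exact (((jev_continuousOn_crossC (hcontS jevE2 jevE3) (hcontA jevE1)).add
        (jev_continuousOn_crossC (hcontA jevE3) (hcontS jevE2 jevE1))).mul hφcont).add
        ((jev_continuousOn_crossC (hcontA jevE3) (hcontA jevE1)).mul (hph1c (0, 1)))
    · refine continuousOn_const.mul (ContinuousOn.add (ContinuousOn.mul ?_ (hph1c (1, 0)))
        (hWc.mul (hpdr2C 1 0)))
      exact (continuousOn_const.mul (continuousOn_const.sub ((hcUre.pow 2).add
        (hcUim.pow 2)))).mul
        (((continuousOn_const.mul ((hcUre.mul (Complex.continuous_re.comp_continuousOn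
          (hcontA jevE2))).add (hcUim.mul (Complex.continuous_im.comp_continuousOn
          (hcontA jevE2)))))).neg)
    · refine continuousOn_const.mul (ContinuousOn.add (ContinuousOn.mul ?_ (hph1c (1, 0))) ?_)
      · exact continuousOn_const.mul ((jev_continuousOn_rinnerC (hcontS jevE2 jevE1)
          (hcontA jevE1)).sub (jev_continuousOn_rinnerC (hcontS jevE2 jevE2) (hcontA jevE2)))
      · exact ((jev_continuousOn_rinnerC (hcontA jevE1) (hcontA jevE1)).sub
          (jev_continuousOn_rinnerC (hcontA jevE2) (hcontA jevE2))).mul (hpdr2C 1 0)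
    · exact (((jev_continuousOn_rinnerC (hcontS jevE2 jevE1) (hcontA jevE2)).add
        (jev_continuousOn_rinnerC (hcontA jevE1) (hcontS jevE2 jevE2))).mul (hph1c (0, 1))).add
        ((jev_continuousOn_rinnerC (hcontA jevE1) (hcontA jevE2)).mul (hpdr2C 1 1))
  have hCT : ContinuousOn (jevT U t φ) Hp := by
    unfold jevT
    refine ContinuousOn.add (ContinuousOn.neg (ContinuousOn.mul ?_ ?_)) ?_
    · exact continuousOn_const.div continuous_fst.continuousOn (fun p hp => ne_of_gt hp)
    · exact ((jev_continuousOn_rinnerC (hcontA jevE2) (hcontA jevE1)).mul (hph1c (1, 0))).sub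
        ((jev_continuousOn_rinnerC (hcontA jevE1) (hcontA jevE1)).mul (hph1c (0, 1)))
    · exact ((((jev_continuousOn_rinnerC (hcontA jevE2) (hcontA jevE1)).mul (hpdr2C 0 0)).add
        ((jev_continuousOn_rinnerC (hcontA jevE2) (hcontA jevE2)).mul (hpdr2C 0 1))).sub
        ((jev_continuousOn_rinnerC (hcontA jevE1) (hcontA jevE1)).mul (hpdr2C 1 0))).sub
        ((jev_continuousOn_rinnerC (hcontA jevE1) (hcontA jevE2)).mul (hpdr2C 1 1))
  have hCDJ : ContinuousOn (fun p => jevDJ U t p * φ p) Hp := by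
    unfold jevDJ
    exact ((jev_continuousOn_crossC (hcontS jevE3 jevE1) (hcontA jevE2)).add
      (jev_continuousOn_crossC (hcontA jevE1) (hcontS jevE3 jevE2))).mul hφcont
  -- vanishing off K
  have hzR1 : ∀ p ∉ K, jevR1 U t ε φ p = 0 := fun p hp => by
    simp [jevR1, hφ0z p hp, hφ1z _ p hp]
  have hzR2 : ∀ p ∉ K, jevR2 U t ε φ p = 0 := fun p hp => by
    simp [jevR2, hφ0z p hp, hφ1z _ p hp]
  have hzR1d : ∀ p ∉ K, jevR1d U t ε φ p = 0 := fun p hp => by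
    simp [jevR1d, hφ0z p hp, hφ1z _ p hp, hφ2z _ _ p hp]
  have hzR2d : ∀ p ∉ K, jevR2d U t ε φ p = 0 := fun p hp => by
    simp [jevR2d, hφ0z p hp, hφ1z _ p hp, hφ2z _ _ p hp]
  have hzT : ∀ p ∉ K, jevT U t φ p = 0 := fun p hp => by
    simp [jevT, hφ1z _ p hp, hφ2z _ _ p hp]
  have hzDJ : ∀ p ∉ K, jevDJ U t p * φ p = 0 := fun p hp => by
    rw [hφ0z p hp, mul_zero]
  -- integrability
  have hIR1 : Integrable (jevR1 U t ε φ) := jev_integrable_of_supported hKc hCR1 hKH hzR1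
  have hIR2 : Integrable (jevR2 U t ε φ) := jev_integrable_of_supported hKc hCR2 hKH hzR2
  have hIR1d : Integrable (jevR1d U t ε φ) := jev_integrable_of_supported hKc hCR1d hKH hzR1d
  have hIR2d : Integrable (jevR2d U t ε φ) := jev_integrable_of_supported hKc hCR2d hKH hzR2d
  have hIT : Integrable (jevT U t φ) := jev_integrable_of_supported hKc hCT hKH hzT
  have hIDJ : Integrable (fun p => jevDJ U t p * φ p) :=
    jev_integrable_of_supported hKc hCDJ hKH hzDJ
  -- step 2 : the value of the derivative
  have step2 : ∫ p, jevDJ U t p * φ p = FGPc (u t) φ := by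
    have hpdC0 : ∀ {p : ℝ × ℝ}, p ∈ Hp → pdC 0 (u t) p = jevA U (p, t) jevE1 := by
      intro p hp; rw [pdC, (huslice ht hp).fderiv]; rfl
    have hpdC1 : ∀ {p : ℝ × ℝ}, p ∈ Hp → pdC 1 (u t) p = jevA U (p, t) jevE2 := by
      intro p hp; rw [pdC, (huslice ht hp).fderiv]; rfl
    have hSAeq : ∀ p ∈ Hp, (∑ i : Fin 2, ∑ j : Fin 2, ∑ k : Fin 2,
        epsSym i j * ((if k = (0 : Fin 2) then 1 / p.1 else 0)
          * rinnerC (pdC j (u t) p) (pdC k (u t) p)) * fderiv ℝ φ p (e2 i))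
        = (1 / p.1) * (rinnerC (jevA U (p, t) jevE2) (jevA U (p, t) jevE1)
            * fderiv ℝ φ p (1, 0)
          - rinnerC (jevA U (p, t) jevE1) (jevA U (p, t) jevE1) * fderiv ℝ φ p (0, 1)) := by
      intro p hp
      simp only [Fin.sum_univ_two]
      rw [hpdC0 hp, hpdC1 hp]
      simp [epsSym, e2]
      ring
    have hSBeq : ∀ p ∈ Hp, (∑ i : Fin 2, ∑ j : Fin 2, ∑ k : Fin 2,
        epsSym i j * rinnerC (pdC j (u t) p) (pdC k (u t) p) * pdr2 i k φ p)
        = rinnerC (jevA U (p, t) jevE2) (jevA U (p, t) jevE1) * pdr2 0 0 φ p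
          + rinnerC (jevA U (p, t) jevE2) (jevA U (p, t) jevE2) * pdr2 0 1 φ p
          - rinnerC (jevA U (p, t) jevE1) (jevA U (p, t) jevE1) * pdr2 1 0 φ p
          - rinnerC (jevA U (p, t) jevE1) (jevA U (p, t) jevE2) * pdr2 1 1 φ p := by
      intro p hp
      simp only [Fin.sum_univ_two]
      rw [hpdC0 hp, hpdC1 hp]
      simp [epsSym, e2]
      ring
    have hSAz : ∀ p ∉ K, (∑ i : Fin 2, ∑ j : Fin 2, ∑ k : Fin 2,
        epsSym i j * ((if k = (0 : Fin 2) then 1 / p.1 else 0)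
          * rinnerC (pdC j (u t) p) (pdC k (u t) p)) * fderiv ℝ φ p (e2 i)) = 0 := by
      intro p hp
      simp [Fin.sum_univ_two, hφ1z _ p hp]
    have hSBz : ∀ p ∉ K, (∑ i : Fin 2, ∑ j : Fin 2, ∑ k : Fin 2,
        epsSym i j * rinnerC (pdC j (u t) p) (pdC k (u t) p) * pdr2 i k φ p) = 0 := by
      intro p hp
      simp [Fin.sum_univ_two, hφ2z 0 0 p hp, hφ2z 0 1 p hp, hφ2z 1 0 p hp, hφ2z 1 1 p hp]
    have hSAcont : ContinuousOn (fun p : ℝ × ℝ => ∑ i : Fin 2, ∑ j : Fin 2, ∑ k : Fin 2,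
        epsSym i j * ((if k = (0 : Fin 2) then 1 / p.1 else 0)
          * rinnerC (pdC j (u t) p) (pdC k (u t) p)) * fderiv ℝ φ p (e2 i)) Hp := by
      apply ContinuousOn.congr (f := fun p : ℝ × ℝ =>
        (1 / p.1) * (rinnerC (jevA U (p, t) jevE2) (jevA U (p, t) jevE1)
            * fderiv ℝ φ p (1, 0)
          - rinnerC (jevA U (p, t) jevE1) (jevA U (p, t) jevE1) * fderiv ℝ φ p (0, 1)))
      · exact (continuousOn_const.div continuous_fst.continuousOn (fun p hp => ne_of_gt hp)).mul
          (((jev_continuousOn_rinnerC (hcontA jevE2) (hcontA jevE1)).mul (hph1c (1, 0))).sub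
            ((jev_continuousOn_rinnerC (hcontA jevE1) (hcontA jevE1)).mul (hph1c (0, 1))))
      · intro p hp
        exact hSAeq p hp
    have hSBcont : ContinuousOn (fun p : ℝ × ℝ => ∑ i : Fin 2, ∑ j : Fin 2, ∑ k : Fin 2,
        epsSym i j * rinnerC (pdC j (u t) p) (pdC k (u t) p) * pdr2 i k φ p) Hp := by
      apply ContinuousOn.congr (f := fun p : ℝ × ℝ =>
        rinnerC (jevA U (p, t) jevE2) (jevA U (p, t) jevE1) * pdr2 0 0 φ p
          + rinnerC (jevA U (p, t) jevE2) (jevA U (p, t) jevE2) * pdr2 0 1 φ p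
          - rinnerC (jevA U (p, t) jevE1) (jevA U (p, t) jevE1) * pdr2 1 0 φ p
          - rinnerC (jevA U (p, t) jevE1) (jevA U (p, t) jevE2) * pdr2 1 1 φ p)
      · exact ((((jev_continuousOn_rinnerC (hcontA jevE2) (hcontA jevE1)).mul (hpdr2C 0 0)).add
          ((jev_continuousOn_rinnerC (hcontA jevE2) (hcontA jevE2)).mul (hpdr2C 0 1))).sub
          ((jev_continuousOn_rinnerC (hcontA jevE1) (hcontA jevE1)).mul (hpdr2C 1 0))).sub
          ((jev_continuousOn_rinnerC (hcontA jevE1) (hcontA jevE2)).mul (hpdr2C 1 1))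
      · intro p hp
        exact hSBeq p hp
    have ISA : Integrable (fun p : ℝ × ℝ => ∑ i : Fin 2, ∑ j : Fin 2, ∑ k : Fin 2,
        epsSym i j * ((if k = (0 : Fin 2) then 1 / p.1 else 0)
          * rinnerC (pdC j (u t) p) (pdC k (u t) p)) * fderiv ℝ φ p (e2 i)) :=
      jev_integrable_of_supported hKc hSAcont hKH hSAz
    have ISB : Integrable (fun p : ℝ × ℝ => ∑ i : Fin 2, ∑ j : Fin 2, ∑ k : Fin 2,
        epsSym i j * rinnerC (pdC j (u t) p) (pdC k (u t) p) * pdr2 i k φ p) :=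
      jev_integrable_of_supported hKc hSBcont hKH hSBz
    have hpt : ∀ p : ℝ × ℝ, jevDJ U t p * φ p
        = (jevR1d U t ε φ p + jevR2d U t ε φ p) + jevT U t φ p := by
      intro p
      by_cases hp : p ∈ Hp
      · exact hmaster p hp
      · have hpK : p ∉ K := fun hK => hp (hKH hK)
        rw [hzDJ p hpK, hzR1d p hpK, hzR2d p hpK, hzT p hpK]
        ring
    calc ∫ p, jevDJ U t p * φ p
        = ∫ p, ((jevR1d U t ε φ p + jevR2d U t ε φ p) + jevT U t φ p) :=
          integral_congr_ae (Filter.Eventually.of_forall hpt)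
      _ = ((∫ p, jevR1d U t ε φ p) + ∫ p, jevR2d U t ε φ p) + ∫ p, jevT U t φ p := by
          have hIsum : Integrable (fun p => jevR1d U t ε φ p + jevR2d U t ε φ p) :=
            hIR1d.add hIR2d
          rw [integral_add hIsum hIT, integral_add hIR1d hIR2d]
      _ = ∫ p, jevT U t φ p := by
          rw [jev_integral_lineDeriv_eq_zero hR1line hIR1 hIR1d,
              jev_integral_lineDeriv_eq_zero hR2line hIR2 hIR2d]
          ring
      _ = FGPc (u t) φ := by
          have ISAneg : Integrable (fun p : ℝ × ℝ => -(∑ i : Fin 2, ∑ j : Fin 2, ∑ k : Fin 2,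
              epsSym i j * ((if k = (0 : Fin 2) then 1 / p.1 else 0)
                * rinnerC (pdC j (u t) p) (pdC k (u t) p)) * fderiv ℝ φ p (e2 i))) := ISA.neg
          have e1 : ∫ p, jevT U t φ p
              = ∫ p, (-(∑ i : Fin 2, ∑ j : Fin 2, ∑ k : Fin 2,
                  epsSym i j * ((if k = (0 : Fin 2) then 1 / p.1 else 0)
                    * rinnerC (pdC j (u t) p) (pdC k (u t) p)) * fderiv ℝ φ p (e2 i))
                + ∑ i : Fin 2, ∑ j : Fin 2, ∑ k : Fin 2,
                  epsSym i j * rinnerC (pdC j (u t) p) (pdC k (u t) p) * pdr2 i k φ p) := by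
            apply integral_congr_ae
            apply Filter.Eventually.of_forall
            intro p
            dsimp only
            by_cases hp : p ∈ Hp
            · rw [jevT, hSAeq p hp, hSBeq p hp]
            · have hpK : p ∉ K := fun hK => hp (hKH hK)
              rw [hzT p hpK, hSAz p hpK, hSBz p hpK]
              ring
          rw [e1, integral_add ISAneg ISB, integral_neg]
          rw [FGPc]
          rw [setIntegral_eq_integral_of_forall_compl_eq_zero
            (fun p hp => hSAz p (fun hK => hp (hKH hK)))]
          rw [setIntegral_eq_integral_of_forall_compl_eq_zero
            (fun p hp => hSBz p (fun hK => hp (hKH hK)))]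
  -- step 1 : differentiation under the integral sign
  have step1 : HasDerivAt (fun τ => ∫ p, Jac (u τ) p * φ p) (∫ p, jevDJ U t p * φ p) t := by
    obtain ⟨δ, hδpos, hδI⟩ : ∃ δ > 0, Metric.ball t δ ⊆ I := Metric.isOpen_iff.1 hI t ht
    have hδ2I : Metric.ball t (δ / 2) ⊆ I :=
      (Metric.ball_subset_ball (by linarith)).trans hδI
    have hδ2cI : Metric.closedBall t (δ / 2) ⊆ I :=
      (Metric.closedBall_subset_ball (by linarith)).trans hδI
    -- continuity of the Jacobian density on Hp, for τ ∈ I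
    have hJc : ∀ {τ : ℝ}, τ ∈ I → ContinuousOn (fun p => Jac (u τ) p * φ p) Hp := by
      intro τ hτ
      apply ContinuousOn.congr (f := fun p : ℝ × ℝ =>
        crossC (jevA U (p, τ) jevE1) (jevA U (p, τ) jevE2) * φ p)
      · exact (jev_continuousOn_crossC (hcontAg jevE1 hτ) (hcontAg jevE2 hτ)).mul hφcont
      · intro p hp
        show Jac (u τ) p * φ p = _
        rw [Jac, hpdR hτ hp, hpdZ hτ hp]
    have hFint : ∀ {τ : ℝ}, τ ∈ I → Integrable (fun p => Jac (u τ) p * φ p) := by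
      intro τ hτ
      exact jev_integrable_of_supported hKc (hJc hτ) hKH
        (fun p hp => by rw [hφ0z p hp, mul_zero])
    -- uniform bound on K × closedBall
    have hDJjointC : ContinuousOn (fun q : (ℝ × ℝ) × ℝ =>
        (crossC (jevS U q jevE3 jevE1) (jevA U q jevE2)
          + crossC (jevA U q jevE1) (jevS U q jevE3 jevE2)) * φ q.1)
        (K ×ˢ Metric.closedBall t (δ / 2)) := by
      have hsub : K ×ˢ Metric.closedBall t (δ / 2) ⊆ Ω :=
        Set.prod_mono hKH hδ2cI
      refine ContinuousOn.mono ?_ hsub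
      have hA : ∀ w : (ℝ × ℝ) × ℝ, ContinuousOn (fun q => jevA U q w) Ω := fun w =>
        (ContinuousLinearMap.apply ℝ ℂ w).continuous.comp_continuousOn hcontD1
      have hS : ∀ w w' : (ℝ × ℝ) × ℝ, ContinuousOn (fun q => jevS U q w w') Ω := by
        intro w w'
        have h2 : ContinuousOn (fun q => (fderiv ℝ (fderiv ℝ U) q) w) Ω :=
          (ContinuousLinearMap.apply ℝ ((ℝ × ℝ) × ℝ →L[ℝ] ℂ) w).continuous.comp_continuousOn
            hcontD2
        exact (ContinuousLinearMap.apply ℝ ℂ w').continuous.comp_continuousOn h2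
      have hφq : Continuous (fun q : (ℝ × ℝ) × ℝ => φ q.1) :=
        hφ.continuous.comp continuous_fst
      exact ((jev_continuousOn_crossC (hS jevE3 jevE1) (hA jevE2)).add
        (jev_continuousOn_crossC (hA jevE1) (hS jevE3 jevE2))).mul hφq.continuousOn
    obtain ⟨C, hC⟩ := (hKc.prod (isCompact_closedBall t (δ / 2))).exists_bound_of_continuousOn
      hDJjointC
    have hboundint : Integrable (K.indicator fun _ : ℝ × ℝ => C) :=
      (integrable_indicator_iff hKm).2
        (integrableOn_const hKc.measure_lt_top.ne)
    refine (hasDerivAt_integral_of_dominated_loc_of_deriv_le (μ := volume)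
      (F := fun τ p => Jac (u τ) p * φ p) (F' := fun τ p => jevDJ U τ p * φ p)
      (x₀ := t) (bound := K.indicator fun _ => C) (Metric.ball_mem_nhds t (by positivity : (0:ℝ) < δ / 2))
      ?_ (hFint ht) ?_ ?_ hboundint ?_).2
    · filter_upwards [hI.mem_nhds ht] with τ hτ using (hFint hτ).aestronglyMeasurable
    · exact hIDJ.aestronglyMeasurable
    · apply Filter.Eventually.of_forall
      intro p τ hτ
      by_cases hpK : p ∈ K
      · have hmem : ((p, τ) : (ℝ × ℝ) × ℝ) ∈ K ×ˢ Metric.closedBall t (δ / 2) :=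
          Set.mem_prod.2 ⟨hpK, Metric.ball_subset_closedBall hτ⟩
        have h3 := hC (p, τ) hmem
        rw [Set.indicator_of_mem hpK]
        simpa [jevDJ] using h3
      · rw [Set.indicator_of_notMem hpK, hφ0z p hpK]
        simp
    · apply Filter.Eventually.of_forall
      intro p τ hτ
      by_cases hp : p ∈ Hp
      · have hτI : τ ∈ I := hδ2I hτ
        have h1 : HasDerivAt
            (fun τ' => crossC (jevA U (p, τ') jevE1) (jevA U (p, τ') jevE2) * φ p)
            ((crossC (jevS U (p, τ) jevE3 jevE1) (jevA U (p, τ) jevE2)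
              + crossC (jevA U (p, τ) jevE1) (jevS U (p, τ) jevE3 jevE2)) * φ p) τ :=
          ((hAtime jevE1 hτI hp).jev_crossC (hAtime jevE2 hτI hp)).mul_const (φ p)
        have hev : (fun τ' => Jac (u τ') p * φ p) =ᶠ[nhds τ]
            (fun τ' => crossC (jevA U (p, τ') jevE1) (jevA U (p, τ') jevE2) * φ p) := by
          filter_upwards [Metric.isOpen_ball.mem_nhds hτ] with τ' hτ'
          show Jac (u τ') p * φ p = _
          rw [Jac, hpdR (hδ2I hτ') hp, hpdZ (hδ2I hτ') hp]
        exact (h1.congr_of_eventuallyEq hev)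
      · have hpK : p ∉ K := fun hK => hp (hKH hK)
        simp only [hφ0z p hpK, mul_zero]
        exact hasDerivAt_const _ _
  -- conclusion
  have hfun : (fun τ => ∫ p in Hp, Jac (u τ) p * φ p) = fun τ => ∫ p, Jac (u τ) p * φ p := by
    funext τ
    exact setIntegral_eq_integral_of_forall_compl_eq_zero
      (fun p hp => by rw [hφ0z p (fun hK => hp (hKH hK)), mul_zero])
  rw [hfun, ← step2]
  exact step1

end
end

section
/- (Conservation laws for the system (LF)_ε.) Let 0 < ε < 1, n ≥ 1, let I ⊂ ℝ be an interval, and let a = (a₁,…,aₙ) : I → Hⁿ be a C¹ solution of (LF)_ε such that for all s ∈ I the points a₁(s),…,aₙ(s) are pairwise distinct. Then both the Hamiltonian H_ε(a₁(s),…,aₙ(s)) and the momentum P(a₁(s),…,aₙ(s)) := π Σᵢ r(aᵢ(s))² are constant in s on I. -/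
open MeasureTheory Filter Metric
open scoped Topology Real

noncomputable section

/-! ### Auxiliary lemmas for the proof of `LFeps_conservation` -/

section ConservationAux

set_option maxHeartbeats 1000000

private abbrev EEc := (ℝ × ℝ) × (ℝ × ℝ)

private def Qfc (x : EEc) (t : ℝ) : ℝ :=
  x.1.1 * x.1.1 + x.2.1 * x.2.1 + (x.2.2 - x.1.2) * (x.2.2 - x.1.2)
    - 2 * Real.cos t * (x.1.1 * x.2.1)

private lemma avec_eq_c (a p : ℝ × ℝ) :
    Avec a p = (a.1 / 2) * ∫ t in Set.Ioc (0:ℝ) (2 * π),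
      Real.cos t * (Real.sqrt (Qfc (a, p) t))⁻¹ := by
  unfold Avec
  rw [intervalIntegral.integral_of_le (by positivity)]
  congr 1
  refine integral_congr_ae (Eventually.of_forall fun t => ?_)
  simp only [div_eq_mul_inv, Qfc]
  congr 3
  ring

private lemma qfc_lower (x : EEc) (h1 : 0 ≤ x.1.1) (h2 : 0 ≤ x.2.1) (t : ℝ) :
    ‖x.1 - x.2‖ ^ 2 ≤ Qfc x t := by
  have hc := Real.cos_le_one t
  have hmax : ‖x.1 - x.2‖ ^ 2 ≤ (x.1.1 - x.2.1) ^ 2 + (x.1.2 - x.2.2) ^ 2 := by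
    have : ‖x.1 - x.2‖ = max ‖(x.1 - x.2).1‖ ‖(x.1 - x.2).2‖ := Prod.norm_def _
    rw [this]
    rcases max_cases ‖(x.1 - x.2).1‖ ‖(x.1 - x.2).2‖ with ⟨h, _⟩ | ⟨h, _⟩ <;> rw [h] <;>
      simp only [Prod.fst_sub, Prod.snd_sub, Real.norm_eq_abs, sq_abs] <;>
      nlinarith [sq_nonneg (x.1.1 - x.2.1), sq_nonneg (x.1.2 - x.2.2)]
  refine hmax.trans ?_
  simp only [Qfc]
  nlinarith [mul_nonneg h1 h2]

private def ph11 : EEc →L[ℝ] ℝ :=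
  (ContinuousLinearMap.fst ℝ ℝ ℝ).comp (ContinuousLinearMap.fst ℝ (ℝ×ℝ) (ℝ×ℝ))
private def ph12 : EEc →L[ℝ] ℝ :=
  (ContinuousLinearMap.snd ℝ ℝ ℝ).comp (ContinuousLinearMap.fst ℝ (ℝ×ℝ) (ℝ×ℝ))
private def ph21 : EEc →L[ℝ] ℝ :=
  (ContinuousLinearMap.fst ℝ ℝ ℝ).comp (ContinuousLinearMap.snd ℝ (ℝ×ℝ) (ℝ×ℝ))
private def ph22 : EEc →L[ℝ] ℝ :=
  (ContinuousLinearMap.snd ℝ ℝ ℝ).comp (ContinuousLinearMap.snd ℝ (ℝ×ℝ) (ℝ×ℝ))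

private lemma ph11_norm : ‖ph11‖ ≤ 1 := by
  refine ContinuousLinearMap.opNorm_le_bound _ zero_le_one fun v => ?_
  simpa [ph11] using ((norm_fst_le v.1).trans (norm_fst_le v))
private lemma ph12_norm : ‖ph12‖ ≤ 1 := by
  refine ContinuousLinearMap.opNorm_le_bound _ zero_le_one fun v => ?_
  simpa [ph12] using ((norm_snd_le v.1).trans (norm_fst_le v))
private lemma ph21_norm : ‖ph21‖ ≤ 1 := by
  refine ContinuousLinearMap.opNorm_le_bound _ zero_le_one fun v => ?_
  simpa [ph21] using ((norm_fst_le v.2).trans (norm_snd_le v))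
private lemma ph22_norm : ‖ph22‖ ≤ 1 := by
  refine ContinuousLinearMap.opNorm_le_bound _ zero_le_one fun v => ?_
  simpa [ph22] using ((norm_snd_le v.2).trans (norm_snd_le v))

private def QDc (x : EEc) (t : ℝ) : EEc →L[ℝ] ℝ :=
  ((x.1.1 • ph11 + x.1.1 • ph11) + (x.2.1 • ph21 + x.2.1 • ph21)
      + ((x.2.2 - x.1.2) • (ph22 - ph12) + (x.2.2 - x.1.2) • (ph22 - ph12)))
    - (2 * Real.cos t) • (x.1.1 • ph21 + x.2.1 • ph11)

private lemma hasFDerivAt_Qfc (x : EEc) (t : ℝ) :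
    HasFDerivAt (fun y : EEc => Qfc y t) (QDc x t) x := by
  have h1 : HasFDerivAt (fun y : EEc => y.1) (ContinuousLinearMap.fst ℝ (ℝ×ℝ) (ℝ×ℝ)) x :=
    hasFDerivAt_fst
  have h2 : HasFDerivAt (fun y : EEc => y.2) (ContinuousLinearMap.snd ℝ (ℝ×ℝ) (ℝ×ℝ)) x :=
    hasFDerivAt_snd
  exact (((h1.fst.mul h1.fst).add (h2.fst.mul h2.fst)).add
      ((h2.snd.sub h1.snd).mul (h2.snd.sub h1.snd))).sub
    ((h1.fst.mul h2.fst).const_mul (2 * Real.cos t))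

private lemma QDc_norm_le (x : EEc) (t : ℝ) (R : ℝ) (hR : 0 ≤ R)
    (h11 : |x.1.1| ≤ R) (h21 : |x.2.1| ≤ R) (h12 : |x.1.2| ≤ R) (h22 : |x.2.2| ≤ R) :
    ‖QDc x t‖ ≤ 16 * R := by
  have hct : |Real.cos t| ≤ 1 := Real.abs_cos_le_one t
  have hd : |x.2.2 - x.1.2| ≤ 2 * R := by
    calc |x.2.2 - x.1.2| ≤ |x.2.2| + |x.1.2| := abs_sub _ _
    _ ≤ 2 * R := by linarith
  have hdf : ‖ph22 - ph12‖ ≤ 2 := by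
    calc ‖ph22 - ph12‖ ≤ ‖ph22‖ + ‖ph12‖ := norm_sub_le _ _
    _ ≤ 2 := by linarith [ph22_norm, ph12_norm]
  have hsm : ∀ (c : ℝ) (φ : EEc →L[ℝ] ℝ) (A B : ℝ), |c| ≤ A → ‖φ‖ ≤ B → 0 ≤ A →
      ‖c • φ‖ ≤ A * B := by
    intro c φ A B hA hB h0
    refine (norm_smul_le c φ).trans ?_
    rw [Real.norm_eq_abs]
    exact mul_le_mul hA hB (norm_nonneg _) h0
  calc ‖QDc x t‖ ≤ ‖(x.1.1 • ph11 + x.1.1 • ph11) + (x.2.1 • ph21 + x.2.1 • ph21)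
        + ((x.2.2 - x.1.2) • (ph22 - ph12) + (x.2.2 - x.1.2) • (ph22 - ph12))‖
        + ‖(2 * Real.cos t) • (x.1.1 • ph21 + x.2.1 • ph11)‖ := norm_sub_le _ _
    _ ≤ ((‖x.1.1 • ph11‖ + ‖x.1.1 • ph11‖) + (‖x.2.1 • ph21‖ + ‖x.2.1 • ph21‖)
        + (‖(x.2.2 - x.1.2) • (ph22 - ph12)‖ + ‖(x.2.2 - x.1.2) • (ph22 - ph12)‖))
        + ‖(2 * Real.cos t) • (x.1.1 • ph21 + x.2.1 • ph11)‖ := by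
        gcongr
        calc ‖_ + _ + _‖ ≤ ‖x.1.1 • ph11 + x.1.1 • ph11‖ + ‖x.2.1 • ph21 + x.2.1 • ph21‖
            + ‖(x.2.2 - x.1.2) • (ph22 - ph12) + (x.2.2 - x.1.2) • (ph22 - ph12)‖ :=
          norm_add₃_le
        _ ≤ _ := by gcongr <;> exact norm_add_le _ _
    _ ≤ ((R * 1 + R * 1) + (R * 1 + R * 1) + ((2 * R) * 2 + (2 * R) * 2))
        + ‖(2 * Real.cos t) • (x.1.1 • ph21 + x.2.1 • ph11)‖ := by
        gcongr <;>
          [exact hsm _ _ _ _ h11 ph11_norm hR; exact hsm _ _ _ _ h11 ph11_norm hR;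
           exact hsm _ _ _ _ h21 ph21_norm hR; exact hsm _ _ _ _ h21 ph21_norm hR;
           exact hsm _ _ _ _ hd hdf (by linarith); exact hsm _ _ _ _ hd hdf (by linarith)]
    _ ≤ ((R * 1 + R * 1) + (R * 1 + R * 1) + ((2 * R) * 2 + (2 * R) * 2))
        + 2 * (R * 1 + R * 1) := by
        have hD : ‖x.1.1 • ph21 + x.2.1 • ph11‖ ≤ R * 1 + R * 1 :=
          (norm_add_le _ _).trans (by
            gcongr <;> [exact hsm _ _ _ _ h11 ph21_norm hR; exact hsm _ _ _ _ h21 ph11_norm hR])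
        have h2c : |2 * Real.cos t| ≤ 2 := by
          rw [abs_mul, abs_two]; linarith
        gcongr
        exact hsm _ _ _ _ h2c hD (by norm_num)
    _ ≤ 16 * R := by linarith

private def FDc (x : EEc) (t : ℝ) : EEc →L[ℝ] ℝ :=
  Real.cos t • ((-(1 / (2 * Real.sqrt (Qfc x t))) / Real.sqrt (Qfc x t) ^ 2) • QDc x t)

private lemma hasFDerivAt_Fc (x : EEc) (t : ℝ) (hq : 0 < Qfc x t) :
    HasFDerivAt (fun y : EEc => Real.cos t * (Real.sqrt (Qfc y t))⁻¹) (FDc x t) x := by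
  have hs : HasDerivAt Real.sqrt (1 / (2 * Real.sqrt (Qfc x t))) (Qfc x t) :=
    Real.hasDerivAt_sqrt (ne_of_gt hq)
  have hsn : Real.sqrt (Qfc x t) ≠ 0 := ne_of_gt (Real.sqrt_pos.mpr hq)
  have hinv : HasDerivAt (fun y : ℝ => (Real.sqrt y)⁻¹)
      (-(1 / (2 * Real.sqrt (Qfc x t))) / Real.sqrt (Qfc x t) ^ 2) (Qfc x t) := hs.inv hsn
  have := hinv.comp_hasFDerivAt x (hasFDerivAt_Qfc x t)
  simpa [FDc, Function.comp_def] using this.const_mul (Real.cos t)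

private lemma avec_differentiableAt {x₀ : EEc} (h1 : 0 < x₀.1.1) (h2 : 0 < x₀.2.1)
    (hne : x₀.1 ≠ x₀.2) : DifferentiableAt ℝ (fun y : EEc => Avec y.1 y.2) x₀ := by
  have heq : (fun y : EEc => Avec y.1 y.2)
      = fun y : EEc => (y.1.1 / 2) * ∫ t in Set.Ioc (0:ℝ) (2 * π),
          Real.cos t * (Real.sqrt (Qfc y t))⁻¹ :=
    funext fun y => avec_eq_c y.1 y.2
  rw [heq]
  set δ : ℝ := ‖x₀.1 - x₀.2‖ with hδ
  have hδpos : 0 < δ := norm_pos_iff.mpr (sub_ne_zero.mpr hne)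
  set ε' : ℝ := min (min (x₀.1.1 / 2) (x₀.2.1 / 2)) (δ / 4) with hε'
  have hε'pos : 0 < ε' := lt_min (lt_min (by linarith) (by linarith)) (by linarith)
  set m : ℝ := (δ / 2) ^ 2 with hm
  have hmpos : 0 < m := by positivity
  set R : ℝ := ‖x₀‖ + ε' with hR
  have hRpos : 0 < R := by positivity
  have hball : ∀ x ∈ ball x₀ ε', (∀ t, m ≤ Qfc x t) ∧
      |x.1.1| ≤ R ∧ |x.2.1| ≤ R ∧ |x.1.2| ≤ R ∧ |x.2.2| ≤ R := by
    intro x hx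
    rw [mem_ball, dist_eq_norm] at hx
    have hxn : ‖x‖ ≤ R := by
      calc ‖x‖ = ‖x₀ + (x - x₀)‖ := by congr 1; abel
      _ ≤ ‖x₀‖ + ‖x - x₀‖ := norm_add_le _ _
      _ ≤ R := by rw [hR]; linarith
    have hco : ∀ y : EEc, |y.1.1| ≤ ‖y‖ ∧ |y.2.1| ≤ ‖y‖ ∧ |y.1.2| ≤ ‖y‖ ∧ |y.2.2| ≤ ‖y‖ := by
      intro y
      refine ⟨?_, ?_, ?_, ?_⟩
      · simpa using (norm_fst_le y.1).trans (norm_fst_le y)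
      · simpa using (norm_fst_le y.2).trans (norm_snd_le y)
      · simpa using (norm_snd_le y.1).trans (norm_fst_le y)
      · simpa using (norm_snd_le y.2).trans (norm_snd_le y)
    obtain ⟨c11, c21, c12, c22⟩ := hco x
    have hx11 : 0 ≤ x.1.1 := by
      have h := (hco (x - x₀)).1
      have h' : |x.1.1 - x₀.1.1| ≤ ε' := by
        have := h.trans hx.le
        simpa using this
      have hε1 : ε' ≤ x₀.1.1 / 2 := (min_le_left _ _).trans (min_le_left _ _)
      have := abs_le.mp h'
      linarith
    have hx21 : 0 ≤ x.2.1 := by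
      have h := (hco (x - x₀)).2.1
      have h' : |x.2.1 - x₀.2.1| ≤ ε' := by
        have := h.trans hx.le
        simpa using this
      have hε2 : ε' ≤ x₀.2.1 / 2 := (min_le_left _ _).trans (min_le_right _ _)
      have := abs_le.mp h'
      linarith
    have hdist : δ / 2 ≤ ‖x.1 - x.2‖ := by
      have e1 : ‖x.1 - x₀.1‖ ≤ ε' := by simpa using (norm_fst_le (x - x₀)).trans hx.le
      have e2 : ‖x.2 - x₀.2‖ ≤ ε' := by simpa using (norm_snd_le (x - x₀)).trans hx.le
      have hε3 : ε' ≤ δ / 4 := min_le_right _ _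
      have : δ ≤ ‖x.1 - x.2‖ + ‖x.1 - x₀.1‖ + ‖x.2 - x₀.2‖ := by
        calc δ = ‖(x.1 - x.2) + ((x.2 - x₀.2) - (x.1 - x₀.1))‖ := by
              rw [hδ]; congr 1; abel
        _ ≤ ‖x.1 - x.2‖ + ‖(x.2 - x₀.2) - (x.1 - x₀.1)‖ := norm_add_le _ _
        _ ≤ ‖x.1 - x.2‖ + (‖x.2 - x₀.2‖ + ‖x.1 - x₀.1‖) := by
              gcongr; exact norm_sub_le _ _
        _ = _ := by ring
      linarith
    refine ⟨fun t => ?_, c11.trans hxn, c21.trans hxn, c12.trans hxn, c22.trans hxn⟩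
    calc m = (δ / 2) ^ 2 := rfl
    _ ≤ ‖x.1 - x.2‖ ^ 2 := by gcongr <;> linarith
    _ ≤ Qfc x t := qfc_lower x hx11 hx21 t
  have hx₀ball := hball x₀ (mem_ball_self hε'pos)
  have hq₀ : ∀ t, 0 < Qfc x₀ t := fun t => lt_of_lt_of_le hmpos (hx₀ball.1 t)
  have hint : HasFDerivAt (fun y : EEc => ∫ t in Set.Ioc (0:ℝ) (2 * π),
      Real.cos t * (Real.sqrt (Qfc y t))⁻¹)
      (∫ t in Set.Ioc (0:ℝ) (2 * π), FDc x₀ t ∂volume) x₀ := by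
    have hmeas : ∀ᶠ x in 𝓝 x₀, AEStronglyMeasurable
        (fun t => Real.cos t * (Real.sqrt (Qfc x t))⁻¹)
        (volume.restrict (Set.Ioc (0:ℝ) (2 * π))) := by
      refine Eventually.of_forall fun x => ?_
      have : Measurable fun t => Real.cos t * (Real.sqrt (Qfc x t))⁻¹ := by
        apply Real.measurable_cos.mul
        apply Measurable.inv
        exact Real.continuous_sqrt.measurable.comp (by unfold Qfc; fun_prop)
      exact this.aestronglyMeasurable
    have hcont₀ : Continuous fun t => Real.cos t * (Real.sqrt (Qfc x₀ t))⁻¹ := by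
      apply Real.continuous_cos.mul
      apply Continuous.inv₀
      · exact Real.continuous_sqrt.comp (by unfold Qfc; fun_prop)
      · intro t
        exact ne_of_gt (Real.sqrt_pos.mpr (hq₀ t))
    have hF_int : Integrable (fun t => Real.cos t * (Real.sqrt (Qfc x₀ t))⁻¹)
        (volume.restrict (Set.Ioc (0:ℝ) (2 * π))) := hcont₀.integrableOn_Ioc
    have hF'meas : AEStronglyMeasurable (FDc x₀)
        (volume.restrict (Set.Ioc (0:ℝ) (2 * π))) := by
      have hQc : Continuous fun t => Qfc x₀ t := by unfold Qfc; fun_prop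
      have hsq : Continuous fun t => Real.sqrt (Qfc x₀ t) := Real.continuous_sqrt.comp hQc
      have hsqne : ∀ t, Real.sqrt (Qfc x₀ t) ≠ 0 :=
        fun t => ne_of_gt (Real.sqrt_pos.mpr (hq₀ t))
      have hQD : Continuous fun t => QDc x₀ t := by
        unfold QDc
        exact continuous_const.sub
          ((continuous_const.mul Real.continuous_cos).smul continuous_const)
      have : Continuous (FDc x₀) := by
        unfold FDc
        exact Real.continuous_cos.smul
          (((continuous_const.div (continuous_const.mul hsq)
              (fun t => mul_ne_zero two_ne_zero (hsqne t))).neg.div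
              (hsq.pow 2)
              (fun t => pow_ne_zero 2 (hsqne t))).smul hQD)
      exact this.aestronglyMeasurable
    set M : ℝ := (1 / (2 * m * Real.sqrt m)) * (16 * R) with hM
    have hbound : ∀ᵐ t ∂(volume.restrict (Set.Ioc (0:ℝ) (2 * π))),
        ∀ x ∈ ball x₀ ε', ‖FDc x t‖ ≤ M := by
      refine ae_of_all _ fun t x hx => ?_
      obtain ⟨hq, b11, b21, b12, b22⟩ := hball x hx
      have hqt := hq t
      have hqpos : 0 < Qfc x t := lt_of_lt_of_le hmpos hqt
      have hsq : Real.sqrt m ≤ Real.sqrt (Qfc x t) := Real.sqrt_le_sqrt hqt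
      have hsm : 0 < Real.sqrt m := Real.sqrt_pos.mpr hmpos
      have hspos : 0 < Real.sqrt (Qfc x t) := Real.sqrt_pos.mpr hqpos
      have hd : |(-(1 / (2 * Real.sqrt (Qfc x t))) / Real.sqrt (Qfc x t) ^ 2)|
          ≤ 1 / (2 * m * Real.sqrt m) := by
        have e1 : |(-(1 / (2 * Real.sqrt (Qfc x t))) / Real.sqrt (Qfc x t) ^ 2)|
            = 1 / (2 * Real.sqrt (Qfc x t) * Qfc x t) := by
          rw [abs_div, abs_neg, abs_div, abs_one, Real.sq_sqrt (le_of_lt hqpos),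
            abs_of_pos (by positivity), abs_of_pos hqpos, div_div]
        rw [e1]
        have hle : 2 * m * Real.sqrt m ≤ 2 * Real.sqrt (Qfc x t) * Qfc x t := by
          nlinarith [hsm, hspos, hqt, hmpos]
        exact one_div_le_one_div_of_le (by positivity) hle
      calc ‖FDc x t‖ = ‖Real.cos t • ((-(1 / (2 * Real.sqrt (Qfc x t))) /
            Real.sqrt (Qfc x t) ^ 2) • QDc x t)‖ := rfl
      _ ≤ ‖Real.cos t‖ * ‖(-(1 / (2 * Real.sqrt (Qfc x t))) /
            Real.sqrt (Qfc x t) ^ 2) • QDc x t‖ :=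
          norm_smul_le (Real.cos t) ((-(1 / (2 * Real.sqrt (Qfc x t))) /
            Real.sqrt (Qfc x t) ^ 2) • QDc x t)
      _ ≤ 1 * (‖(-(1 / (2 * Real.sqrt (Qfc x t))) / Real.sqrt (Qfc x t) ^ 2)‖ * ‖QDc x t‖) := by
            gcongr
            · rw [Real.norm_eq_abs]; exact Real.abs_cos_le_one t
            · exact norm_smul_le ((-(1 / (2 * Real.sqrt (Qfc x t))) /
                Real.sqrt (Qfc x t) ^ 2)) (QDc x t)
      _ ≤ 1 * ((1 / (2 * m * Real.sqrt m)) * (16 * R)) := by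
            gcongr
            · rw [Real.norm_eq_abs]; exact hd
            · exact QDc_norm_le x t R (le_of_lt hRpos) b11 b21 b12 b22
      _ = M := by rw [hM]; ring
    have hbint : Integrable (fun _ : ℝ => M)
        (volume.restrict (Set.Ioc (0:ℝ) (2 * π))) := by
      apply integrable_const
    have hdiff : ∀ᵐ t ∂(volume.restrict (Set.Ioc (0:ℝ) (2 * π))),
        ∀ x ∈ ball x₀ ε', HasFDerivAt
          (fun y : EEc => Real.cos t * (Real.sqrt (Qfc y t))⁻¹) (FDc x t) x := by
      refine ae_of_all _ fun t x hx => ?_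
      exact hasFDerivAt_Fc x t (lt_of_lt_of_le hmpos ((hball x hx).1 t))
    exact hasFDerivAt_integral_of_dominated_of_fderiv_le (ball_mem_nhds x₀ hε'pos) hmeas hF_int hF'meas
      hbound hbint hdiff
  have hintd := hint.differentiableAt
  fun_prop

private lemma avec_shift (a p : ℝ × ℝ) (c : ℝ) :
    Avec (a.1, a.2 + c) (p.1, p.2 + c) = Avec a p := by
  unfold Avec
  simp only
  congr 1
  congr 1
  funext t
  have : p.2 + c - (a.2 + c) = p.2 - a.2 := by ring
  rw [this]

private lemma hfun_shift {n : ℕ} (ε c : ℝ) (a : Fin n → ℝ × ℝ) :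
    Hfun ε (fun i => ((a i).1, (a i).2 + c)) = Hfun ε a := by
  unfold Hfun
  refine Finset.sum_congr rfl fun i _ => ?_
  simp only [avec_shift]

private lemma hfun_differentiableAt {n : ℕ} {ε : ℝ} (hε : ε ≠ 0) (a : Fin n → ℝ × ℝ)
    (hH : ∀ i, 0 < (a i).1) (hinj : Function.Injective a) :
    DifferentiableAt ℝ (fun b : Fin n → ℝ × ℝ => Hfun ε b) a := by
  unfold Hfun
  refine DifferentiableAt.fun_sum fun i _ => ?_
  have hproj : ∀ k : Fin n, DifferentiableAt ℝ (fun b : Fin n → ℝ × ℝ => b k) a := by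
    intro k
    exact (ContinuousLinearMap.proj k : (Fin n → ℝ × ℝ) →L[ℝ] ℝ × ℝ).differentiableAt
  have hbi1 : DifferentiableAt ℝ (fun b : Fin n → ℝ × ℝ => (b i).1) a := (hproj i).fst
  have hlog : DifferentiableAt ℝ (fun b : Fin n → ℝ × ℝ => Real.log ((b i).1 / ε)) a := by
    have hdiv : DifferentiableAt ℝ (fun b : Fin n → ℝ × ℝ => (b i).1 / ε) a := by
      fun_prop
    exact hdiv.log (div_ne_zero (ne_of_gt (hH i)) hε)
  have hsum : DifferentiableAt ℝ
      (fun b : Fin n → ℝ × ℝ => ∑ j ∈ Finset.univ.erase i, Avec (b j) (b i)) a := by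
    refine DifferentiableAt.fun_sum fun j hj => ?_
    have hji : j ≠ i := Finset.ne_of_mem_erase hj
    have hpair : DifferentiableAt ℝ (fun b : Fin n → ℝ × ℝ => ((b j), (b i)) : _ → EEc) a :=
      (hproj j).prodMk (hproj i)
    have hA : DifferentiableAt ℝ (fun y : EEc => Avec y.1 y.2) ((a j), (a i)) :=
      avec_differentiableAt (hH j) (hH i) (fun h => hji (hinj h))
    have := hA.comp a hpair
    simpa [Function.comp_def] using this
  fun_prop

private lemma fderiv_update_comp {n : ℕ} {G : (Fin n → ℝ × ℝ) → ℝ} {a : Fin n → ℝ × ℝ}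
    (hG : DifferentiableAt ℝ G a) (i : Fin n) (v : ℝ × ℝ) :
    fderiv ℝ (fun x => G (Function.update a i x)) (a i) v
      = fderiv ℝ G a (Pi.single i v) := by
  have hupd : HasFDerivAt (Function.update a i)
      (ContinuousLinearMap.pi (Pi.single i (ContinuousLinearMap.id ℝ (ℝ × ℝ)))) (a i) :=
    hasFDerivAt_update a (a i)
  have hG' : HasFDerivAt G (fderiv ℝ G a) (Function.update a i (a i)) := by
    rw [Function.update_eq_self]; exact hG.hasFDerivAt
  have hcomp := hG'.comp (a i) hupd
  have heq : (fun x => G (Function.update a i x)) = G ∘ Function.update a i := rfl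
  rw [heq, hcomp.fderiv]
  simp only [ContinuousLinearMap.coe_comp', Function.comp_apply]
  congr 1
  funext j
  simp only [ContinuousLinearMap.pi_apply]
  by_cases h : j = i
  · subst h; simp
  · simp [Pi.single_apply, h]

private lemma fderiv_single_eq {n : ℕ} {G : (Fin n → ℝ × ℝ) → ℝ} {a : Fin n → ℝ × ℝ}
    (hG : DifferentiableAt ℝ G a) (i : Fin n) (v : ℝ × ℝ) :
    fderiv ℝ G a (Pi.single i v)
      = v.1 * (gradR (fun x => G (Function.update a i x)) (a i)).1
        + v.2 * (gradR (fun x => G (Function.update a i x)) (a i)).2 := by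
  have hv : v = v.1 • ((1:ℝ), (0:ℝ)) + v.2 • ((0:ℝ), (1:ℝ)) := by
    simp [Prod.ext_iff]
  rw [gradR]
  simp only [pdRr, pdZr]
  rw [fderiv_update_comp hG i (1,0), fderiv_update_comp hG i (0,1)]
  conv_lhs => rw [hv]
  rw [Pi.single_add, Pi.single_smul, Pi.single_smul]
  rw [map_add, _root_.map_smul, _root_.map_smul]
  simp [smul_eq_mul]

end ConservationAux

/-- **Conservation laws for the system `(LF)_ε`** : the Hamiltonian `H_ε` and the
momentum `P` are constant along solutions. -/
theorem LFeps_conservation (ε : ℝ) (hε0 : 0 < ε) (hε1 : ε < 1) (n : ℕ) (hn : 1 ≤ n)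
    (I : Set ℝ) (hI : I.OrdConnected) (a : ℝ → Fin n → ℝ × ℝ)
    (hsol : IsLFepsSol ε a I)
    (hH : ∀ s ∈ I, ∀ i, a s i ∈ Hp)
    (hdist : ∀ s ∈ I, Function.Injective (a s)) :
    ∀ s₁ ∈ I, ∀ s₂ ∈ I,
      Hfun ε (a s₁) = Hfun ε (a s₂) ∧
      π * ∑ i, (a s₁ i).1 ^ 2 = π * ∑ i, (a s₂ i).1 ^ 2 := by
  classical
  have hεne : ε ≠ 0 := ne_of_gt hε0
  -- differentiability of the Hamiltonian along the trajectory
  have hGd : ∀ s ∈ I, DifferentiableAt ℝ (fun b : Fin n → ℝ × ℝ => Hfun ε b) (a s) :=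
    fun s hs => hfun_differentiableAt hεne (a s) (fun i => hH s hs i) (hdist s hs)
  -- the derivative in the constant vertical direction vanishes (translation invariance)
  have hzconst : ∀ s ∈ I,
      fderiv ℝ (fun b : Fin n → ℝ × ℝ => Hfun ε b) (a s) (fun _ => ((0:ℝ), (1:ℝ))) = 0 := by
    intro s hs
    set w : Fin n → ℝ × ℝ := fun _ => ((0:ℝ), (1:ℝ)) with hw
    have hγ : HasDerivAt (fun c : ℝ => a s + c • w) w 0 := by
      have h1 : HasDerivAt (fun c : ℝ => c • w) ((1:ℝ) • w) 0 := (hasDerivAt_id 0).smul_const w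
      simpa using h1.const_add (a s)
    have hγ0 : a s + (0:ℝ) • w = a s := by simp
    have h1 : HasDerivAt (fun c : ℝ => Hfun ε (a s + c • w))
        (fderiv ℝ (fun b : Fin n → ℝ × ℝ => Hfun ε b) (a s) w) 0 := by
      have hGd' : HasFDerivAt (fun b : Fin n → ℝ × ℝ => Hfun ε b)
          (fderiv ℝ (fun b : Fin n → ℝ × ℝ => Hfun ε b) (a s))
          ((fun c : ℝ => a s + c • w) 0) := by
        have := (hGd s hs).hasFDerivAt
        simpa [hγ0] using this
      exact hGd'.comp_hasDerivAt 0 hγ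
    have h2 : (fun c : ℝ => Hfun ε (a s + c • w)) = fun _ => Hfun ε (a s) := by
      funext c
      have he : (a s + c • w) = fun i => ((a s i).1, (a s i).2 + c) := by
        funext i
        simp [hw, Prod.ext_iff]
      rw [he]
      exact hfun_shift ε c (a s)
    have h3 : HasDerivAt (fun c : ℝ => Hfun ε (a s + c • w)) 0 0 := by
      rw [h2]; exact hasDerivAt_const 0 _
    exact h1.unique h3
  -- the Hamiltonian has zero derivative along the flow
  have hderivH : ∀ s ∈ I, HasDerivWithinAt (fun τ => Hfun ε (a τ)) 0 I s := by
    intro s hs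
    set v : Fin n → ℝ × ℝ :=
      fun i => (1 / (π * |Real.log ε|)) • Jmat ((a s i).1) (gradHi ε (a s) i) with hv
    have hva : HasDerivWithinAt (fun τ => a τ) v I s :=
      hasDerivWithinAt_pi.mpr (fun i => hsol i s hs)
    have hcomp : HasDerivWithinAt (fun τ => Hfun ε (a τ))
        (fderiv ℝ (fun b : Fin n → ℝ × ℝ => Hfun ε b) (a s) v) I s :=
      (hGd s hs).hasFDerivAt.comp_hasDerivWithinAt s hva
    have hzero : fderiv ℝ (fun b : Fin n → ℝ × ℝ => Hfun ε b) (a s) v = 0 := by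
      have hsingle : ∑ i, Pi.single i (v i) = v := Finset.univ_sum_single v
      rw [← hsingle, map_sum]
      refine Finset.sum_eq_zero fun i _ => ?_
      rw [fderiv_single_eq (hGd s hs) i (v i)]
      have hvi1 : (v i).1
          = (1 / (π * |Real.log ε|)) * (-(gradHi ε (a s) i).2 / (a s i).1) := by
        simp [hv, Jmat, smul_eq_mul]
      have hvi2 : (v i).2
          = (1 / (π * |Real.log ε|)) * ((gradHi ε (a s) i).1 / (a s i).1) := by
        simp [hv, Jmat, smul_eq_mul]
      rw [hvi1, hvi2]
      have hgr : gradHi ε (a s) i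
          = gradR (fun x => Hfun ε (Function.update (a s) i x)) (a s i) := rfl
      rw [hgr]
      ring
    rw [← hzero]
    exact hcomp
  -- the momentum has zero derivative along the flow
  have hderivP : ∀ s ∈ I, HasDerivWithinAt (fun τ => ∑ i, (a τ i).1 ^ 2) 0 I s := by
    intro s hs
    set v : Fin n → ℝ × ℝ :=
      fun i => (1 / (π * |Real.log ε|)) • Jmat ((a s i).1) (gradHi ε (a s) i) with hv
    have hfst : ∀ i : Fin n, HasDerivWithinAt (fun τ => (a τ i).1) ((v i).1) I s := by
      intro i
      have := (ContinuousLinearMap.fst ℝ ℝ ℝ).hasFDerivAt.comp_hasDerivWithinAt s (hsol i s hs)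
      simpa [hv, Function.comp_def] using this
    have hsum := HasDerivWithinAt.fun_sum
      (fun (i : Fin n) (_ : i ∈ Finset.univ) => (hfst i).pow 2)
    have hg2 : ∀ i : Fin n, (gradHi ε (a s) i).2
        = fderiv ℝ (fun b : Fin n → ℝ × ℝ => Hfun ε b) (a s)
            (Pi.single i ((0:ℝ), (1:ℝ))) := by
      intro i
      have hgr : gradHi ε (a s) i
          = gradR (fun x => Hfun ε (Function.update (a s) i x)) (a s i) := rfl
      rw [hgr, gradR]
      simp only [pdZr]
      exact fderiv_update_comp (hGd s hs) i (0, 1)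
    have hsum2 : (∑ i, (gradHi ε (a s) i).2) = 0 := by
      have := Finset.univ_sum_single (fun _ : Fin n => ((0:ℝ), (1:ℝ)))
      calc (∑ i, (gradHi ε (a s) i).2)
          = ∑ i, fderiv ℝ (fun b : Fin n → ℝ × ℝ => Hfun ε b) (a s)
              (Pi.single i ((0:ℝ), (1:ℝ))) := Finset.sum_congr rfl fun i _ => hg2 i
      _ = fderiv ℝ (fun b : Fin n → ℝ × ℝ => Hfun ε b) (a s)
              (∑ i, Pi.single i ((0:ℝ), (1:ℝ))) := (map_sum _ _ _).symm
      _ = 0 := by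
          rw [show (∑ i, Pi.single i ((0:ℝ), (1:ℝ)))
              = (fun _ : Fin n => ((0:ℝ), (1:ℝ))) from this]
          exact hzconst s hs
    have hzero : (∑ i : Fin n, ((2:ℕ):ℝ) * (a s i).1 ^ (2 - 1) * (v i).1) = 0 := by
      have hterm : ∀ i : Fin n, ((2:ℕ):ℝ) * (a s i).1 ^ (2 - 1) * (v i).1
          = (-2 * (1 / (π * |Real.log ε|))) * (gradHi ε (a s) i).2 := by
        intro i
        have hvi1 : (v i).1
            = (1 / (π * |Real.log ε|)) * (-(gradHi ε (a s) i).2 / (a s i).1) := by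
          simp [hv, Jmat, smul_eq_mul]
        have hr : (a s i).1 ≠ 0 := ne_of_gt (hH s hs i)
        rw [hvi1, show (2:ℕ) - 1 = 1 from rfl, pow_one]
        linear_combination (-(2:ℝ) * (1 / (π * |Real.log ε|)) * (gradHi ε (a s) i).2)
          * mul_inv_cancel₀ hr
      calc (∑ i : Fin n, ((2:ℕ):ℝ) * (a s i).1 ^ (2 - 1) * (v i).1)
          = ∑ i : Fin n, (-2 * (1 / (π * |Real.log ε|))) * (gradHi ε (a s) i).2 :=
            Finset.sum_congr rfl fun i _ => hterm i
      _ = (-2 * (1 / (π * |Real.log ε|))) * ∑ i, (gradHi ε (a s) i).2 := by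
            rw [Finset.mul_sum]
      _ = 0 := by rw [hsum2]; ring
    rw [← hzero]
    exact hsum
  -- constancy from zero derivative on an ord-connected set
  have hconv : Convex ℝ I := convex_iff_ordConnected.mpr hI
  have hconst : ∀ (f : ℝ → ℝ), (∀ s ∈ I, HasDerivWithinAt f 0 I s) →
      ∀ s₁ ∈ I, ∀ s₂ ∈ I, f s₁ = f s₂ := by
    intro f hf s₁ hs₁ s₂ hs₂
    have hb := hconv.norm_image_sub_le_of_norm_hasFDerivWithin_le
      (f' := fun _ : ℝ => (0 : ℝ →L[ℝ] ℝ)) (C := (0:ℝ))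
      (fun x hx => by
        have h0 : (ContinuousLinearMap.toSpanSingleton ℝ (0:ℝ))
            = (0 : ℝ →L[ℝ] ℝ) := by ext y; simp
        have := (hf x hx).hasFDerivWithinAt
        rwa [h0] at this)
      (fun x _ => by simp) hs₂ hs₁
    have h0 : ‖f s₁ - f s₂‖ ≤ 0 := by simpa using hb
    exact sub_eq_zero.mp (norm_le_zero_iff.mp h0)
  intro s₁ hs₁ s₂ hs₂
  refine ⟨hconst _ hderivH s₁ hs₁ s₂ hs₂, ?_⟩
  have := hconst _ hderivP s₁ hs₁ s₂ hs₂
  rw [this]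


end
end
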